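/- arXiv:2107.08082 — 5 statements merged into one kernel-verified Lean document; each statement's English description precedes it below -/
import Mathlib

section
/- Let P and Q be finite posets, R an indecomposable commutative unital ring, Φ : I^3(P,R) → I^3(Q,R) an isomorphism, and φ : P → Q the induced bijection (i.e. Φ(e_x) − e_{φ(x)} ∈ J^3_1(Q,R) for all x ∈ P). Then for all x < y in P with l(x,y) = 1 one has φ(x) < φ(y) with l(φ(x),φ(y)) = 1, and Φ(e_{xxy} + e_{xyy}) = e_{φ(x)φ(x)φ(y)} + e_{φ(x)φ(y)φ(y)} + σ for some σ ∈ J^3_2(Q,R). -/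
/-- 3-flags (chains x ≤ y ≤ z) in a poset `P`. -/
abbrev Flag3 (P : Type*) [PartialOrder P] : Type _ :=
  {t : P × P × P // t.1 ≤ t.2.1 ∧ t.2.1 ≤ t.2.2}

/-- `ell x y` is the length of the interval `[x,y]`, i.e. the maximal cardinality of a
chain in `[x,y]` minus one. -/
noncomputable def ell {P : Type*} [PartialOrder P] (x y : P) : ℕ∞ :=
  (Set.Icc x y).chainHeight (· < ·) - 1

section PreDefs

variable (P R : Type*) [PartialOrder P] [LocallyFiniteOrder P] [CommRing R]

/-- The multiplication of the partial flag incidence algebra `I^3(P,R)`. -/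
def mul3 : (Flag3 P → R) → (Flag3 P → R) → (Flag3 P → R) := fun f g t =>
  ∑ p ∈ ((Finset.Icc t.1.1 t.1.2.1) ×ˢ (Finset.Icc t.1.2.1 t.1.2.2)).attach,
    f ⟨(t.1.1, p.1.1, p.1.2), by
        obtain ⟨h1, h2⟩ := Finset.mem_product.mp p.2
        rw [Finset.mem_Icc] at h1 h2
        exact ⟨h1.1, h1.2.trans h2.1⟩⟩ *
    g ⟨(p.1.1, p.1.2, t.1.2.2), by
        obtain ⟨h1, h2⟩ := Finset.mem_product.mp p.2
        rw [Finset.mem_Icc] at h1 h2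
        exact ⟨h1.2.trans h2.1, h2.2⟩⟩

variable {P}

/-- The standard basis element `e_t` of `I^3(P,R)`. -/
def e3 [DecidableEq P] (t0 : Flag3 P) : Flag3 P → R := fun t => if t = t0 then 1 else 0

variable (P)

/-- The ideal `J^3_k(P,R)` of functions vanishing on flags `(x,y,z)` with `l(x,z) < k`. -/
def J3 (k : ℕ) : Submodule R (Flag3 P → R) where
  carrier := {f | ∀ t : Flag3 P, ell t.1.1 t.1.2.2 < (k : ℕ∞) → f t = 0}
  add_mem' := by
    intro f g hf hg t ht
    simp only [Pi.add_apply, hf t ht, hg t ht, add_zero]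
  zero_mem' := by intro t _; rfl
  smul_mem' := by
    intro c f hf t ht
    simp only [Pi.smul_apply, hf t ht, smul_zero]

/-- The commutator submodule `[U,V]`. -/
def commSub (U V : Submodule R (Flag3 P → R)) : Submodule R (Flag3 P → R) :=
  Submodule.span R {h | ∃ f ∈ U, ∃ g ∈ V, h = mul3 P R f g - mul3 P R g f}

end PreDefs

/-! Put `w = e_{xxy} + e_{xyy}`. Because `x ⋖ y`, `w = [e_{xxy}, e_{xyy}]` is idempotent,
`e_z w = 0` for `z ≠ x`, `w e_z = 0` for `z ≠ y`, and `[e_x, w] = e_{xxy}`.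

Commutators of two elements of `J_1` vanish on the diagonal and take equal values at `(a,a,c)`
and `(a,c,c)` for every cover `a ⋖ c`. Since `J_1 = [I, I]`, an isomorphism preserves `J_1`,
so `W = Φ w = [Φ e_{xxy}, Φ e_{xyy}]` has this cover symmetry. Moreover `W ∉ J_2`: otherwise
`Φ e_{xxy} = [Φ e_x, W] ∈ J_2 ⊆ [J_1, J_1]`, and pulling back along `Φ⁻¹` would make `e_{xxy}`
cover symmetric. So `W(a,a,c) ≠ 0` for some cover `a ⋖ c`. Multiplying `W` on either side by
`Φ e_z`, whose diagonal entry at `φ z` is `1`, forces `a = φ x` and `c = φ y`; finally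
`W(φx,φx,φy)` is a nonzero idempotent of `R`, hence `1`.
-/

section Length

variable {P : Type*} [PartialOrder P] {a c m u : P}

lemma ell_self (a : P) : ell a a = 0 := by
  rw [ell, Set.Icc_self,
    ← Set.encard_eq_chainHeight_of_isChain _ Set.subsingleton_singleton.isChain,
    Set.encard_singleton, tsub_self]

lemma le_ell_of_isChain {s : Set P} {k : ℕ} (hs : s ⊆ Set.Icc a c) (hchain : IsChain (· < ·) s)
    (hk : (k : ℕ∞) < s.encard) : k ≤ ell a c :=
  ENat.le_sub_one_of_lt (hk.trans_le (Set.encard_le_chainHeight_of_isChain _ _ hs hchain))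

lemma one_le_ell (h : a < c) : 1 ≤ ell a c := by
  refine le_ell_of_isChain (s := {a, c}) ?_ (IsChain.pair h) ?_
  · simp [Set.insert_subset_iff, h.le]
  · rw [Set.encard_pair h.ne]; norm_num

lemma two_le_ell (h₁ : a < m) (h₂ : m < c) : 2 ≤ ell a c := by
  refine le_ell_of_isChain (s := {a, m, c}) ?_ ?_ ?_
  · simp [Set.insert_subset_iff, h₁.le, h₂.le, (h₁.trans h₂).le]
  · exact (IsChain.pair h₂).insert fun b hb _ => by
      rcases hb with rfl | rfl
      exacts [Or.inl h₁, Or.inl (h₁.trans h₂)]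
  · rw [Set.encard_insert_of_notMem (by simp [h₁.ne, (h₁.trans h₂).ne]), Set.encard_pair h₂.ne]
    norm_num

lemma CovBy.ell_eq_one (h : a ⋖ c) : ell a c = 1 := by
  rw [ell, h.Icc_eq, ← Set.encard_eq_chainHeight_of_isChain _ (IsChain.pair h.lt),
    Set.encard_pair h.lt.ne]
  rfl

lemma eq_of_ell_lt_one (h : a ≤ c) (hl : ell a c < 1) : a = c := by
  by_contra hne
  exact (one_le_ell (h.lt_of_ne hne)).not_gt hl

lemma covBy_of_ell_lt_two (h : a < c) (hl : ell a c < 2) : a ⋖ c :=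
  ⟨h, fun _ h₁ h₂ => (two_le_ell h₁ h₂).not_gt hl⟩

lemma ell_antitone_left (h : a ≤ u) : ell u c ≤ ell a c :=
  tsub_le_tsub_right (Set.chainHeight_mono _ _ _ (Set.Icc_subset_Icc_left h)) 1

lemma ell_monotone_right (h : u ≤ c) : ell a u ≤ ell a c :=
  tsub_le_tsub_right (Set.chainHeight_mono _ _ _ (Set.Icc_subset_Icc_right h)) 1

lemma Flag3.eq_diag_or_covBy (t : Flag3 P) (ht : ell t.1.1 t.1.2.2 < 2) :
    (∃ q, t = ⟨(q, q, q), le_rfl, le_rfl⟩) ∨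
      ∃ a c, ∃ h : a ⋖ c, t = ⟨(a, a, c), le_rfl, h.le⟩ ∨ t = ⟨(a, c, c), h.le, le_rfl⟩ := by
  obtain ⟨⟨a, b, c⟩, hab, hbc⟩ := t
  dsimp only at hab hbc ht
  rcases (hab.trans hbc).eq_or_lt with rfl | hac
  · obtain rfl := le_antisymm hbc hab
    exact Or.inl ⟨b, rfl⟩
  · have hcov := covBy_of_ell_lt_two hac ht
    have hb : b ∈ Set.Icc a c := ⟨hab, hbc⟩
    rw [hcov.Icc_eq] at hb
    rcases hb with rfl | rfl
    exacts [Or.inr ⟨b, c, hcov, Or.inl rfl⟩, Or.inr ⟨a, b, hcov, Or.inr rfl⟩]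

lemma CovBy.finset_Icc_eq [LocallyFiniteOrder P] [DecidableEq P] (h : a ⋖ c) :
    Finset.Icc a c = {a, c} :=
  Finset.coe_injective (by push_cast; exact h.Icc_eq)

end Length

local infixl:70 " ⋆ " => mul3 _ _

section Basis

variable {P R : Type*} [PartialOrder P] [CommRing R]

open Classical in
noncomputable def extendByZero (f : Flag3 P → R) (p : P × P × P) : R :=
  if h : p.1 ≤ p.2.1 ∧ p.2.1 ≤ p.2.2 then f ⟨p, h⟩ else 0

lemma extendByZero_of_le (f : Flag3 P → R) {a b c : P} (hab : a ≤ b) (hbc : b ≤ c) :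
    extendByZero f (a, b, c) = f ⟨(a, b, c), hab, hbc⟩ :=
  dif_pos ⟨hab, hbc⟩

variable [DecidableEq P]

lemma e3_apply (s t : Flag3 P) : e3 R s t = if t.1 = s.1 then 1 else 0 := by
  simp only [e3, Subtype.ext_iff]

lemma extendByZero_e3 (s : Flag3 P) (p : P × P × P) :
    extendByZero (e3 R s) p = if p = s.1 then 1 else 0 := by
  by_cases h : p.1 ≤ p.2.1 ∧ p.2.1 ≤ p.2.2
  · rw [extendByZero, dif_pos h, e3_apply]
  · rw [extendByZero, dif_neg h, if_neg]
    rintro rfl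
    exact h s.2

lemma mem_of_forall_e3_mem [Finite P] {f : Flag3 P → R} {S : Submodule R (Flag3 P → R)}
    (h : ∀ t, f t ≠ 0 → e3 R t ∈ S) : f ∈ S := by
  have := Fintype.ofFinite (Flag3 P)
  have hsum : f = ∑ t, f t • e3 R t := by
    funext u
    simp [e3, Finset.sum_apply]
  rw [hsum]
  refine Submodule.sum_mem _ fun t _ => ?_
  by_cases ht : f t = 0
  · rw [ht, zero_smul]
    exact S.zero_mem
  · exact S.smul_mem _ (h t ht)

end Basis

section Filtration

variable {P R : Type*} [PartialOrder P] [CommRing R] {f : Flag3 P → R}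

lemma mem_J3_one_iff : f ∈ J3 P R 1 ↔ ∀ q : P, f ⟨(q, q, q), le_rfl, le_rfl⟩ = 0 := by
  refine ⟨fun hf q => hf _ (by simp [ell_self]), fun hf t ht => ?_⟩
  obtain ⟨⟨a, b, c⟩, hab, hbc⟩ := t
  dsimp only at hab hbc ht
  obtain rfl := eq_of_ell_lt_one (hab.trans hbc) (by exact_mod_cast ht)
  obtain rfl := le_antisymm hbc hab
  exact hf b

lemma mem_J3_two_iff :
    f ∈ J3 P R 2 ↔ (∀ q : P, f ⟨(q, q, q), le_rfl, le_rfl⟩ = 0) ∧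
      ∀ a c : P, ∀ h : a ⋖ c,
        f ⟨(a, a, c), le_rfl, h.le⟩ = 0 ∧ f ⟨(a, c, c), h.le, le_rfl⟩ = 0 := by
  constructor
  · intro hf
    refine ⟨fun q => hf _ (by simp [ell_self]), fun a c h => ⟨hf _ ?_, hf _ ?_⟩⟩ <;>
      simp [h.ell_eq_one]
  · rintro ⟨hdiag, hcov⟩ t ht
    obtain ⟨q, rfl⟩ | ⟨a, c, h, rfl | rfl⟩ := t.eq_diag_or_covBy (by exact_mod_cast ht)
    exacts [hdiag q, (hcov a c h).1, (hcov a c h).2]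

variable [DecidableEq P]

lemma e3_mem_J3_one (t : Flag3 P) (ht : t.1.1 ≠ t.1.2.2) : e3 R t ∈ J3 P R 1 := by
  rw [mem_J3_one_iff]
  intro q
  rw [e3_apply, if_neg]
  intro h
  exact ht (by simp [← h])

lemma apply_diag_eq_one_of_sub_mem_J3_one {q : P}
    (hf : f - e3 R ⟨(q, q, q), le_rfl, le_rfl⟩ ∈ J3 P R 1) : f ⟨(q, q, q), le_rfl, le_rfl⟩ = 1 := by
  simpa [e3_apply, sub_eq_zero] using mem_J3_one_iff.1 hf q

end Filtration

def coverSymmetric (P R : Type*) [PartialOrder P] [CommRing R] : Submodule R (Flag3 P → R) where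
  carrier := {f | (∀ q : P, f ⟨(q, q, q), le_rfl, le_rfl⟩ = 0) ∧
    ∀ a c : P, ∀ h : a ⋖ c, f ⟨(a, a, c), le_rfl, h.le⟩ = f ⟨(a, c, c), h.le, le_rfl⟩}
  add_mem' := by
    rintro f g ⟨hf, hf'⟩ ⟨hg, hg'⟩
    exact ⟨fun q => by simp [hf q, hg q], fun a c h => by simp [hf' a c h, hg' a c h]⟩
  zero_mem' := ⟨fun _ => rfl, fun _ _ _ => rfl⟩
  smul_mem' := by
    rintro r f ⟨hf, hf'⟩
    exact ⟨fun q => by simp [hf q], fun a c h => by simp [hf' a c h]⟩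

lemma e3_notMem_coverSymmetric {P R : Type*} [PartialOrder P] [DecidableEq P] [CommRing R]
    [Nontrivial R] {x y : P} (h : x ⋖ y) :
    e3 R ⟨(x, x, y), le_rfl, h.le⟩ ∉ coverSymmetric P R := fun hmem => by
  simpa [e3_apply, h.ne'] using hmem.2 x y h

def e3Edge {P : Type*} [PartialOrder P] [DecidableEq P] (R : Type*) [CommRing R] {x y : P}
    (h : x ≤ y) : Flag3 P → R :=
  e3 R ⟨(x, x, y), le_rfl, h⟩ + e3 R ⟨(x, y, y), h, le_rfl⟩

section CoverSymmetric

variable {P R : Type*} [PartialOrder P] [CommRing R] {W : Flag3 P → R} {a c : P}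

lemma exists_covBy_apply_ne_zero (hW : W ∈ coverSymmetric P R) (hW₂ : W ∉ J3 P R 2) :
    ∃ a c, ∃ h : a ⋖ c, W ⟨(a, a, c), le_rfl, h.le⟩ ≠ 0 := by
  by_contra! hzero
  exact hW₂ (mem_J3_two_iff.2 ⟨hW.1, fun a c h => ⟨hzero a c h, hW.2 a c h ▸ hzero a c h⟩⟩)

lemma e3Edge_apply_covBy_left [DecidableEq P] (h : a ⋖ c) {p r : P} (hpr : p ⋖ r) :
    e3Edge R h.le ⟨(p, p, r), le_rfl, hpr.le⟩ = if p = a ∧ r = c then 1 else 0 := by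
  have := h.ne
  rw [e3Edge, Pi.add_apply, e3_apply, e3_apply]
  simp only [Prod.mk.injEq]
  split_ifs <;> simp_all

lemma e3Edge_apply_covBy_right [DecidableEq P] (h : a ⋖ c) {p r : P} (hpr : p ⋖ r) :
    e3Edge R h.le ⟨(p, r, r), hpr.le, le_rfl⟩ = if p = a ∧ r = c then 1 else 0 := by
  have := hpr.ne
  rw [e3Edge, Pi.add_apply, e3_apply, e3_apply]
  simp only [Prod.mk.injEq]
  split_ifs <;> simp_all

lemma sub_e3Edge_mem_J3_two [DecidableEq P] (hW : W ∈ coverSymmetric P R) (h : a ⋖ c)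
    (hone : W ⟨(a, a, c), le_rfl, h.le⟩ = 1)
    (hsupp : ∀ p r : P, ∀ hpr : p ⋖ r, W ⟨(p, p, r), le_rfl, hpr.le⟩ ≠ 0 → p = a ∧ r = c) :
    W - e3Edge R h.le ∈ J3 P R 2 := by
  have hJ1 : W - e3Edge R h.le ∈ J3 P R 1 :=
    sub_mem (mem_J3_one_iff.2 hW.1) (add_mem (e3_mem_J3_one _ h.ne) (e3_mem_J3_one _ h.ne))
  refine mem_J3_two_iff.2 ⟨mem_J3_one_iff.1 hJ1, fun p r hpr => ?_⟩
  have hW' : W ⟨(p, p, r), le_rfl, hpr.le⟩ = if p = a ∧ r = c then 1 else 0 := by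
    split_ifs with hpr'
    · obtain ⟨rfl, rfl⟩ := hpr'
      exact hone
    · exact not_not.1 (mt (hsupp p r hpr) hpr')
  rw [Pi.sub_apply, Pi.sub_apply, ← hW.2 p r hpr, hW', e3Edge_apply_covBy_left h hpr,
    e3Edge_apply_covBy_right h hpr, sub_self]
  exact ⟨rfl, rfl⟩

end CoverSymmetric

section Multiplication

variable {P R : Type*} [PartialOrder P] [LocallyFiniteOrder P] [CommRing R] {f : Flag3 P → R}

lemma mul3_apply (f g : Flag3 P → R) {a b c : P} (hab : a ≤ b) (hbc : b ≤ c) :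
    (f ⋆ g) ⟨(a, b, c), hab, hbc⟩ = ∑ u ∈ Finset.Icc a b, ∑ v ∈ Finset.Icc b c,
      extendByZero f (a, u, v) * extendByZero g (u, v, c) := by
  rw [mul3, ← Finset.sum_product' (s := Finset.Icc a b) (t := Finset.Icc b c)
      (f := fun u v => extendByZero f (a, u, v) * extendByZero g (u, v, c)),
    ← Finset.sum_attach (Finset.Icc a b ×ˢ Finset.Icc b c)
      (fun p => extendByZero f (a, p.1, p.2) * extendByZero g (p.1, p.2, c))]
  refine Finset.sum_congr rfl fun p _ => ?_
  obtain ⟨h₁, h₂⟩ := Finset.mem_product.mp p.2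
  rw [Finset.mem_Icc] at h₁ h₂
  rw [extendByZero_of_le f h₁.1 (h₁.2.trans h₂.1),
    extendByZero_of_le g (h₁.2.trans h₂.1) h₂.2]

lemma mul3_add_left (f g h : Flag3 P → R) : (f + g) ⋆ h = f ⋆ h + g ⋆ h := by
  funext t
  simp only [mul3, Pi.add_apply, add_mul, Finset.sum_add_distrib]

lemma mul3_add_right (f g h : Flag3 P → R) : f ⋆ (g + h) = f ⋆ g + f ⋆ h := by
  funext t
  simp only [mul3, Pi.add_apply, mul_add, Finset.sum_add_distrib]

lemma mul3_apply_diag (f g : Flag3 P → R) (q : P) :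
    (f ⋆ g) ⟨(q, q, q), le_rfl, le_rfl⟩ =
      f ⟨(q, q, q), le_rfl, le_rfl⟩ * g ⟨(q, q, q), le_rfl, le_rfl⟩ := by
  rw [mul3_apply f g le_rfl le_rfl, Finset.Icc_self, Finset.sum_singleton, Finset.sum_singleton,
    extendByZero_of_le f le_rfl le_rfl, extendByZero_of_le g le_rfl le_rfl]

lemma mul3_apply_covBy_left (f g : Flag3 P → R) {a c : P} (h : a ⋖ c) :
    (f ⋆ g) ⟨(a, a, c), le_rfl, h.le⟩ =
      f ⟨(a, a, a), le_rfl, le_rfl⟩ * g ⟨(a, a, c), le_rfl, h.le⟩ +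
        f ⟨(a, a, c), le_rfl, h.le⟩ * g ⟨(a, c, c), h.le, le_rfl⟩ := by
  classical
  rw [mul3_apply f g le_rfl h.le, Finset.Icc_self, Finset.sum_singleton, h.finset_Icc_eq,
    Finset.sum_pair h.ne, extendByZero_of_le f le_rfl le_rfl, extendByZero_of_le g le_rfl h.le,
    extendByZero_of_le f le_rfl h.le, extendByZero_of_le g h.le le_rfl]

lemma mul3_apply_covBy_right (f g : Flag3 P → R) {a c : P} (h : a ⋖ c) :
    (f ⋆ g) ⟨(a, c, c), h.le, le_rfl⟩ =
      f ⟨(a, a, c), le_rfl, h.le⟩ * g ⟨(a, c, c), h.le, le_rfl⟩ +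
        f ⟨(a, c, c), h.le, le_rfl⟩ * g ⟨(c, c, c), le_rfl, le_rfl⟩ := by
  classical
  rw [mul3_apply f g h.le le_rfl, Finset.Icc_self, h.finset_Icc_eq, Finset.sum_pair h.ne,
    Finset.sum_singleton, Finset.sum_singleton, extendByZero_of_le f le_rfl h.le,
    extendByZero_of_le g h.le le_rfl, extendByZero_of_le f h.le le_rfl,
    extendByZero_of_le g le_rfl le_rfl]

lemma mul3_mem_J3_of_mem_left {k : ℕ} (hf : f ∈ J3 P R k) (g : Flag3 P → R) :
    f ⋆ g ∈ J3 P R k := by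
  rintro ⟨⟨a, b, c⟩, hab, hbc⟩ ht
  rw [mul3_apply _ _ hab hbc]
  refine Finset.sum_eq_zero fun u hu => Finset.sum_eq_zero fun v hv => ?_
  rw [Finset.mem_Icc] at hu hv
  rw [extendByZero_of_le f hu.1 (hu.2.trans hv.1),
    hf _ ((ell_monotone_right hv.2).trans_lt ht), zero_mul]

lemma mul3_mem_J3_of_mem_right {k : ℕ} (g : Flag3 P → R) (hf : f ∈ J3 P R k) :
    g ⋆ f ∈ J3 P R k := by
  rintro ⟨⟨a, b, c⟩, hab, hbc⟩ ht
  rw [mul3_apply _ _ hab hbc]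
  refine Finset.sum_eq_zero fun u hu => Finset.sum_eq_zero fun v hv => ?_
  rw [Finset.mem_Icc] at hu hv
  rw [extendByZero_of_le f (hu.2.trans hv.1) hv.2,
    hf _ ((ell_antitone_left hu.1).trans_lt ht), mul_zero]

variable [DecidableEq P]

lemma mul3_e3_e3_apply (s t u : Flag3 P) :
    (e3 R s ⋆ e3 R t) u = if u.1.1 = s.1.1 ∧ u.1.2.1 ∈ Finset.Icc s.1.2.1 s.1.2.2 ∧
      (s.1.2.1, s.1.2.2, u.1.2.2) = t.1 then 1 else 0 := by
  obtain ⟨⟨a, b, c⟩, hab, hbc⟩ := u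
  obtain ⟨⟨s₁, s₂, s₃⟩, hs⟩ := s
  obtain ⟨⟨t₁, t₂, t₃⟩, ht⟩ := t
  rw [mul3_apply _ _ hab hbc]
  simp only [extendByZero_e3, Prod.mk.injEq, ite_and, ite_mul, one_mul, zero_mul,
    Finset.sum_ite_irrel, Finset.sum_const_zero, Finset.sum_ite_eq']
  split_ifs <;> simp_all

lemma e3_mul3_e3_eq_zero (s t : Flag3 P) (h : ¬(t.1.1 = s.1.2.1 ∧ t.1.2.1 = s.1.2.2)) :
    e3 R s ⋆ e3 R t = 0 := by
  funext u
  rw [mul3_e3_e3_apply, if_neg, Pi.zero_apply]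
  rintro ⟨-, -, hst⟩
  exact h (by simp [← hst])

lemma e3_mul3_e3_of_eq {a b d : P} (hab : a ≤ b) (hbd : b ≤ d) :
    e3 R ⟨(a, b, b), hab, le_rfl⟩ ⋆ e3 R ⟨(b, b, d), le_rfl, hbd⟩ = e3 R ⟨(a, b, d), hab, hbd⟩ := by
  funext ⟨⟨u₁, u₂, u₃⟩, hu⟩
  rw [mul3_e3_e3_apply, e3_apply]
  simp only [Finset.Icc_self, Finset.mem_singleton, Prod.mk.injEq]
  grind

lemma e3_mul3_e3_of_covBy {a b c d : P} (hab : a ≤ b) (hbc : b ⋖ c) (hcd : c ≤ d) :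
    e3 R ⟨(a, b, c), hab, hbc.le⟩ ⋆ e3 R ⟨(b, c, d), hbc.le, hcd⟩ =
      e3 R ⟨(a, b, d), hab, hbc.le.trans hcd⟩ + e3 R ⟨(a, c, d), hab.trans hbc.le, hcd⟩ := by
  funext ⟨⟨u₁, u₂, u₃⟩, hu⟩
  rw [mul3_e3_e3_apply, Pi.add_apply, e3_apply, e3_apply]
  simp only [hbc.finset_Icc_eq, Finset.mem_insert, Finset.mem_singleton, Prod.mk.injEq]
  have := hbc.lt.ne
  grind

end Multiplication

section Commutators

variable {P R : Type*} [PartialOrder P] [LocallyFiniteOrder P] [CommRing R] {f g : Flag3 P → R}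

lemma sub_mem_commSub {U V : Submodule R (Flag3 P → R)} (hf : f ∈ U) (hg : g ∈ V) :
    f ⋆ g - g ⋆ f ∈ commSub P R U V :=
  Submodule.subset_span ⟨f, hf, g, hg, rfl⟩

lemma mul3_mem_coverSymmetric (hf : f ∈ J3 P R 1) (hg : g ∈ J3 P R 1) :
    f ⋆ g ∈ coverSymmetric P R := by
  rw [mem_J3_one_iff] at hf hg
  refine ⟨fun q => by rw [mul3_apply_diag, hf, zero_mul], fun a c h => ?_⟩
  rw [mul3_apply_covBy_left _ _ h, mul3_apply_covBy_right _ _ h, hf a, hg c, zero_mul, mul_zero,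
    zero_add, add_zero]

lemma commSub_J3_one_le_coverSymmetric :
    commSub P R (J3 P R 1) (J3 P R 1) ≤ coverSymmetric P R := by
  rw [commSub, Submodule.span_le]
  rintro _ ⟨f, hf, g, hg, rfl⟩
  exact sub_mem (mul3_mem_coverSymmetric hf hg) (mul3_mem_coverSymmetric hg hf)

lemma commSub_top_le_J3_one : commSub P R ⊤ ⊤ ≤ J3 P R 1 := by
  rw [commSub, Submodule.span_le]
  rintro _ ⟨f, -, g, -, rfl⟩
  rw [SetLike.mem_coe, mem_J3_one_iff]
  intro q
  rw [Pi.sub_apply, mul3_apply_diag, mul3_apply_diag, mul_comm, sub_self]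

section

variable [DecidableEq P]

lemma e3_eq_commutator {a b c : P} (hab : a ≤ b) (hbc : b ≤ c) (hac : a ≠ c) :
    e3 R ⟨(a, b, c), hab, hbc⟩ =
      e3 R ⟨(a, b, b), hab, le_rfl⟩ ⋆ e3 R ⟨(b, b, c), le_rfl, hbc⟩ -
        e3 R ⟨(b, b, c), le_rfl, hbc⟩ ⋆ e3 R ⟨(a, b, b), hab, le_rfl⟩ := by
  rw [e3_mul3_e3_of_eq hab hbc, e3_mul3_e3_eq_zero, sub_zero]
  exact fun h => hac (h.1.trans h.2)

lemma e3_mem_commSub_top (t : Flag3 P) (ht : t.1.1 ≠ t.1.2.2) : e3 R t ∈ commSub P R ⊤ ⊤ := by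
  obtain ⟨⟨a, b, c⟩, hab, hbc⟩ := t
  rw [e3_eq_commutator hab hbc ht]
  exact sub_mem_commSub Submodule.mem_top Submodule.mem_top

lemma e3_mem_commSub_J3_one_of_lt {a b c : P} (hab : a < b) (hbc : b < c) :
    e3 R ⟨(a, b, c), hab.le, hbc.le⟩ ∈ commSub P R (J3 P R 1) (J3 P R 1) := by
  rw [e3_eq_commutator hab.le hbc.le (hab.trans hbc).ne]
  exact sub_mem_commSub (e3_mem_J3_one _ hab.ne) (e3_mem_J3_one _ hbc.ne)

lemma e3_mem_commSub_J3_one [Finite P] (t : Flag3 P) (ht : 2 ≤ ell t.1.1 t.1.2.2) :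
    e3 R t ∈ commSub P R (J3 P R 1) (J3 P R 1) := by
  obtain ⟨⟨a, b, c⟩, hab, hbc⟩ := t
  dsimp only at hab hbc ht
  have hac : a < c := (hab.trans hbc).lt_of_ne fun h => by simp [h, ell_self] at ht
  have hncov : ¬a ⋖ c := fun h => by simp [h.ell_eq_one] at ht
  rcases hab.eq_or_lt with rfl | hab
  · obtain ⟨m, ham, hmc⟩ := exists_covBy_le_of_lt hac
    have hmc : m < c := hmc.lt_of_ne (by rintro rfl; exact hncov ham)
    have := sub_mem (sub_mem_commSub (e3_mem_J3_one (R := R) ⟨(a, a, m), le_rfl, ham.le⟩ ham.ne)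
      (e3_mem_J3_one ⟨(a, m, c), ham.le, hmc.le⟩ hac.ne)) (e3_mem_commSub_J3_one_of_lt ham.lt hmc)
    rwa [e3_mul3_e3_of_covBy le_rfl ham hmc.le, e3_mul3_e3_eq_zero, sub_zero,
      add_sub_cancel_right] at this
    exact fun h => ham.ne h.1
  rcases hbc.eq_or_lt with rfl | hbc
  · obtain ⟨m, ham, hmc⟩ := exists_le_covBy_of_lt hac
    have ham : a < m := ham.lt_of_ne (by rintro rfl; exact hncov hmc)
    have := sub_mem (sub_mem_commSub (e3_mem_J3_one (R := R) ⟨(a, m, b), ham.le, hmc.le⟩ hac.ne)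
      (e3_mem_J3_one ⟨(m, b, b), hmc.le, le_rfl⟩ hmc.ne)) (e3_mem_commSub_J3_one_of_lt ham hmc.lt)
    rwa [e3_mul3_e3_of_covBy ham.le hmc le_rfl, e3_mul3_e3_eq_zero, sub_zero,
      add_sub_cancel_left] at this
    exact fun h => hac.ne h.1
  · exact e3_mem_commSub_J3_one_of_lt hab hbc

end

lemma J3_one_le_commSub_top [Finite P] : J3 P R 1 ≤ commSub P R ⊤ ⊤ := by
  classical
  intro f hf
  refine mem_of_forall_e3_mem fun t ht => e3_mem_commSub_top t fun h => ht (hf t ?_)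
  rw [h, ell_self]
  exact zero_lt_one

lemma J3_two_le_commSub_J3_one [Finite P] : J3 P R 2 ≤ commSub P R (J3 P R 1) (J3 P R 1) := by
  classical
  intro f hf
  refine mem_of_forall_e3_mem fun t ht => e3_mem_commSub_J3_one t (not_lt.1 fun h => ht (hf t ?_))
  exact_mod_cast h

end Commutators

section CoverSymmetricProducts

variable {P R : Type*} [PartialOrder P] [LocallyFiniteOrder P] [CommRing R]
  {W E : Flag3 P → R} {a c : P}

lemma apply_eq_zero_of_mul3_eq_zero_left (hW : W ∈ coverSymmetric P R) (h : a ⋖ c)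
    (hE : E ⟨(a, a, a), le_rfl, le_rfl⟩ = 1) (hEW : E ⋆ W = 0) :
    W ⟨(a, a, c), le_rfl, h.le⟩ = 0 := by
  have h₁ := congrFun hEW ⟨(a, a, c), le_rfl, h.le⟩
  have h₂ := congrFun hEW ⟨(a, c, c), h.le, le_rfl⟩
  rw [mul3_apply_covBy_left _ _ h, hE, one_mul, Pi.zero_apply] at h₁
  rw [mul3_apply_covBy_right _ _ h, hW.1 c, mul_zero, add_zero, Pi.zero_apply] at h₂
  rwa [h₂, add_zero] at h₁

lemma apply_eq_zero_of_mul3_eq_zero_right (hW : W ∈ coverSymmetric P R) (h : a ⋖ c)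
    (hE : E ⟨(c, c, c), le_rfl, le_rfl⟩ = 1) (hWE : W ⋆ E = 0) :
    W ⟨(a, a, c), le_rfl, h.le⟩ = 0 := by
  have h₁ := congrFun hWE ⟨(a, a, c), le_rfl, h.le⟩
  have h₂ := congrFun hWE ⟨(a, c, c), h.le, le_rfl⟩
  rw [mul3_apply_covBy_left _ _ h, hW.1 a, zero_mul, zero_add, Pi.zero_apply] at h₁
  rw [mul3_apply_covBy_right _ _ h, hE, mul_one, h₁, zero_add, Pi.zero_apply] at h₂
  rwa [hW.2 a c h]

lemma apply_mul_self_of_mul3_self (hW : W ∈ coverSymmetric P R) (hWW : W ⋆ W = W) (h : a ⋖ c) :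
    W ⟨(a, a, c), le_rfl, h.le⟩ * W ⟨(a, a, c), le_rfl, h.le⟩ = W ⟨(a, a, c), le_rfl, h.le⟩ := by
  have := congrFun hWW ⟨(a, a, c), le_rfl, h.le⟩
  rwa [mul3_apply_covBy_left _ _ h, hW.1 a, zero_mul, zero_add, ← hW.2 a c h] at this

end CoverSymmetricProducts

section Edge

variable {P R : Type*} [PartialOrder P] [LocallyFiniteOrder P] [DecidableEq P] [CommRing R]
  {x y : P}

lemma e3Edge_eq_commutator (h : x ⋖ y) :
    e3Edge R h.le = e3 R ⟨(x, x, y), le_rfl, h.le⟩ ⋆ e3 R ⟨(x, y, y), h.le, le_rfl⟩ -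
      e3 R ⟨(x, y, y), h.le, le_rfl⟩ ⋆ e3 R ⟨(x, x, y), le_rfl, h.le⟩ := by
  rw [e3_mul3_e3_of_covBy le_rfl h le_rfl, e3_mul3_e3_eq_zero, sub_zero, e3Edge]
  exact fun hxy => h.ne hxy.1

lemma e3Edge_mul3_self (h : x ⋖ y) : e3Edge R h.le ⋆ e3Edge R h.le = e3Edge R h.le := by
  have hne := h.ne
  rw [e3Edge, mul3_add_left, mul3_add_right, mul3_add_right, e3_mul3_e3_of_covBy le_rfl h le_rfl,
    e3_mul3_e3_eq_zero _ _ (by simp [hne]), e3_mul3_e3_eq_zero _ _ (by simp [hne]),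
    e3_mul3_e3_eq_zero _ _ (by simp [hne]), zero_add, add_zero, add_zero]

lemma e3_diag_mul3_e3Edge {z : P} (h : x ⋖ y) (hz : z ≠ x) :
    e3 R ⟨(z, z, z), le_rfl, le_rfl⟩ ⋆ e3Edge R h.le = 0 := by
  rw [e3Edge, mul3_add_right, e3_mul3_e3_eq_zero _ _ (by simp [hz.symm]),
    e3_mul3_e3_eq_zero _ _ (by simp [hz.symm]), add_zero]

lemma e3Edge_mul3_e3_diag {z : P} (h : x ⋖ y) (hz : z ≠ y) :
    e3Edge R h.le ⋆ e3 R ⟨(z, z, z), le_rfl, le_rfl⟩ = 0 := by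
  rw [e3Edge, mul3_add_left, e3_mul3_e3_eq_zero _ _ (by simp [hz]),
    e3_mul3_e3_eq_zero _ _ (by simp [hz]), add_zero]

lemma e3_diag_mul3_e3Edge_sub (h : x ⋖ y) :
    e3 R ⟨(x, x, x), le_rfl, le_rfl⟩ ⋆ e3Edge R h.le -
      e3Edge R h.le ⋆ e3 R ⟨(x, x, x), le_rfl, le_rfl⟩ = e3 R ⟨(x, x, y), le_rfl, h.le⟩ := by
  rw [e3Edge_mul3_e3_diag h h.ne, sub_zero, e3Edge, mul3_add_right, e3_mul3_e3_of_eq le_rfl h.le,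
    e3_mul3_e3_eq_zero _ _ (by simp [h.ne']), add_zero]

end Edge

section Homomorphisms

variable {P Q R : Type*} [PartialOrder P] [LocallyFiniteOrder P] [PartialOrder Q]
  [LocallyFiniteOrder Q] [CommRing R] {Φ : (Flag3 P → R) →ₗ[R] (Flag3 Q → R)}

lemma map_mem_commSub (hΦ : ∀ f g, Φ (f ⋆ g) = Φ f ⋆ Φ g)
    {U V : Submodule R (Flag3 P → R)} {U' V' : Submodule R (Flag3 Q → R)}
    (hU : ∀ f ∈ U, Φ f ∈ U') (hV : ∀ g ∈ V, Φ g ∈ V') {h : Flag3 P → R}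
    (hh : h ∈ commSub P R U V) : Φ h ∈ commSub Q R U' V' := by
  induction hh using Submodule.span_induction with
  | mem x hx =>
    obtain ⟨f, hf, g, hg, rfl⟩ := hx
    rw [map_sub, hΦ, hΦ]
    exact sub_mem_commSub (hU f hf) (hV g hg)
  | zero => rw [map_zero]; exact zero_mem _
  | add x y _ _ hx hy => rw [map_add]; exact add_mem hx hy
  | smul r x _ hx => rw [map_smul]; exact Submodule.smul_mem _ _ hx

lemma map_mem_J3_one_of_mem_commSub (hΦ : ∀ f g, Φ (f ⋆ g) = Φ f ⋆ Φ g) {f : Flag3 P → R}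
    (hf : f ∈ commSub P R ⊤ ⊤) : Φ f ∈ J3 Q R 1 :=
  commSub_top_le_J3_one (map_mem_commSub hΦ (fun _ _ => Submodule.mem_top)
    (fun _ _ => Submodule.mem_top) hf)

lemma map_mem_coverSymmetric_of_mem_J3_two [Finite P] (hΦ : ∀ f g, Φ (f ⋆ g) = Φ f ⋆ Φ g)
    {f : Flag3 P → R} (hf : f ∈ J3 P R 2) : Φ f ∈ coverSymmetric Q R :=
  have hJ1 : ∀ g ∈ J3 P R 1, Φ g ∈ J3 Q R 1 := fun _ hg =>
    map_mem_J3_one_of_mem_commSub hΦ (J3_one_le_commSub_top hg)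
  commSub_J3_one_le_coverSymmetric (map_mem_commSub hΦ hJ1 hJ1 (J3_two_le_commSub_J3_one hf))

end Homomorphisms

section Isomorphisms

variable {P Q R : Type*} [PartialOrder P] [LocallyFiniteOrder P] [DecidableEq P]
  [PartialOrder Q] [LocallyFiniteOrder Q] [CommRing R] {x y : P}

lemma map_e3Edge_mem_coverSymmetric {Φ : (Flag3 P → R) →ₗ[R] (Flag3 Q → R)}
    (hΦ : ∀ f g, Φ (f ⋆ g) = Φ f ⋆ Φ g) (h : x ⋖ y) :
    Φ (e3Edge R h.le) ∈ coverSymmetric Q R := by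
  rw [e3Edge_eq_commutator h, map_sub, hΦ, hΦ]
  exact commSub_J3_one_le_coverSymmetric (sub_mem_commSub
    (map_mem_J3_one_of_mem_commSub hΦ (e3_mem_commSub_top _ h.ne))
    (map_mem_J3_one_of_mem_commSub hΦ (e3_mem_commSub_top _ h.ne)))

lemma map_e3Edge_notMem_J3_two [Nontrivial R] [Finite Q]
    {Φ : (Flag3 P → R) ≃ₗ[R] (Flag3 Q → R)} (hΦ : ∀ f g, Φ (f ⋆ g) = Φ f ⋆ Φ g) (h : x ⋖ y) :
    Φ (e3Edge R h.le) ∉ J3 Q R 2 := by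
  intro hW
  have hΨ : ∀ f g, Φ.symm (f ⋆ g) = Φ.symm f ⋆ Φ.symm g := fun f g =>
    Φ.injective (by simp only [hΦ, LinearEquiv.apply_symm_apply])
  have hxxy : Φ (e3 R ⟨(x, x, y), le_rfl, h.le⟩) ∈ J3 Q R 2 := by
    rw [← e3_diag_mul3_e3Edge_sub h, map_sub, hΦ, hΦ]
    exact sub_mem (mul3_mem_J3_of_mem_right _ hW) (mul3_mem_J3_of_mem_left hW _)
  apply e3_notMem_coverSymmetric (R := R) h
  simpa using map_mem_coverSymmetric_of_mem_J3_two (Φ := Φ.symm.toLinearMap) hΨ hxxy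

lemma map_e3Edge_support {Φ : (Flag3 P → R) →ₗ[R] (Flag3 Q → R)}
    (hΦ : ∀ f g, Φ (f ⋆ g) = Φ f ⋆ Φ g) {φ : P ≃ Q}
    (hφ : ∀ z, Φ (e3 R ⟨(z, z, z), le_rfl, le_rfl⟩) ⟨(φ z, φ z, φ z), le_rfl, le_rfl⟩ = 1)
    (h : x ⋖ y) (a c : Q) (hac : a ⋖ c)
    (hne : Φ (e3Edge R h.le) ⟨(a, a, c), le_rfl, hac.le⟩ ≠ 0) : a = φ x ∧ c = φ y := by
  have hW := map_e3Edge_mem_coverSymmetric hΦ h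
  constructor
  · by_contra hax
    refine hne (apply_eq_zero_of_mul3_eq_zero_left hW hac (by simpa using hφ (φ.symm a)) ?_)
    rw [← hΦ, e3_diag_mul3_e3Edge h (by rintro rfl; simp at hax), map_zero]
  · by_contra hcy
    refine hne (apply_eq_zero_of_mul3_eq_zero_right hW hac (by simpa using hφ (φ.symm c)) ?_)
    rw [← hΦ, e3Edge_mul3_e3_diag h (by rintro rfl; simp at hcy), map_zero]

end Isomorphisms

theorem iso_image_of_cover_idempotent_with_bijection_general
    {P Q R : Type*} [PartialOrder P] [DecidableEq P] [LocallyFiniteOrder P]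
    [PartialOrder Q] [Fintype Q] [DecidableEq Q] [LocallyFiniteOrder Q]
    [CommRing R] [Nontrivial R] (hR : ∀ r : R, r * r = r → r = 0 ∨ r = 1)
    (Φ : (Flag3 P → R) ≃ₗ[R] (Flag3 Q → R))
    (hΦ : ∀ f g : Flag3 P → R, Φ (mul3 P R f g) = mul3 Q R (Φ f) (Φ g))
    (φ : P ≃ Q)
    (hφ : ∀ x : P,
      Φ (e3 R (⟨(x, x, x), le_rfl, le_rfl⟩ : Flag3 P)) -
        e3 R (⟨(φ x, φ x, φ x), le_rfl, le_rfl⟩ : Flag3 Q) ∈ J3 Q R 1) :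
    ∀ x y : P, ∀ hxy : x < y, ell x y = 1 →
      ∃ h : φ x < φ y, ell (φ x) (φ y) = 1 ∧
        ∃ σ ∈ J3 Q R 2,
          Φ (e3 R (⟨(x, x, y), le_rfl, hxy.le⟩ : Flag3 P) +
              e3 R (⟨(x, y, y), hxy.le, le_rfl⟩ : Flag3 P)) =
            e3 R (⟨(φ x, φ x, φ y), le_rfl, h.le⟩ : Flag3 Q) +
              e3 R (⟨(φ x, φ y, φ y), h.le, le_rfl⟩ : Flag3 Q) + σ := by
  intro x y hxy hl
  have hcov : x ⋖ y := covBy_of_ell_lt_two hxy (by simp [hl])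
  have hW := map_e3Edge_mem_coverSymmetric (Φ := Φ.toLinearMap) hΦ hcov
  have hsupp := map_e3Edge_support (Φ := Φ.toLinearMap) hΦ
    (fun z => apply_diag_eq_one_of_sub_mem_J3_one (hφ z)) hcov
  obtain ⟨a, c, hac, hne⟩ := exists_covBy_apply_ne_zero hW (map_e3Edge_notMem_J3_two hΦ hcov)
  obtain ⟨rfl, rfl⟩ := hsupp a c hac hne
  have hWW : Φ (e3Edge R hcov.le) ⋆ Φ (e3Edge R hcov.le) = Φ (e3Edge R hcov.le) := by
    rw [← hΦ, e3Edge_mul3_self hcov]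
  have hone : Φ (e3Edge R hcov.le) ⟨(φ x, φ x, φ y), le_rfl, hac.le⟩ = 1 :=
    (hR _ (apply_mul_self_of_mul3_self hW hWW hac)).resolve_left hne
  exact ⟨hac.lt, hac.ell_eq_one, _, sub_e3Edge_mem_J3_two hW hac hone hsupp,
    (add_sub_cancel _ _).symm⟩

/-- With `Φ` an isomorphism `I^3(P,R) → I^3(Q,R)` and `φ : P ≃ Q` the
induced bijection, for all `x < y` with `l(x,y) = 1` one has `φ(x) < φ(y)`,
`l(φ(x),φ(y)) = 1`, and `Φ(e_{xxy} + e_{xyy}) = e_{φ(x)φ(x)φ(y)} + e_{φ(x)φ(y)φ(y)} + σ`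
for some `σ ∈ J^3_2(Q,R)`. -/
theorem iso_image_of_cover_idempotent_with_bijection
    {P Q R : Type*} [PartialOrder P] [Fintype P] [DecidableEq P] [LocallyFiniteOrder P]
    [PartialOrder Q] [Fintype Q] [DecidableEq Q] [LocallyFiniteOrder Q]
    [CommRing R] [Nontrivial R] (hR : ∀ r : R, r * r = r → r = 0 ∨ r = 1)
    (Φ : (Flag3 P → R) ≃ₗ[R] (Flag3 Q → R))
    (hΦ : ∀ f g : Flag3 P → R, Φ (mul3 P R f g) = mul3 Q R (Φ f) (Φ g))
    (φ : P ≃ Q)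
    (hφ : ∀ x : P,
      Φ (e3 R (⟨(x, x, x), le_rfl, le_rfl⟩ : Flag3 P)) -
        e3 R (⟨(φ x, φ x, φ x), le_rfl, le_rfl⟩ : Flag3 Q) ∈ J3 Q R 1) :
    ∀ x y : P, ∀ hxy : x < y, ell x y = 1 →
      ∃ h : φ x < φ y, ell (φ x) (φ y) = 1 ∧
        ∃ σ ∈ J3 Q R 2,
          Φ (e3 R (⟨(x, x, y), le_rfl, hxy.le⟩ : Flag3 P) +
              e3 R (⟨(x, y, y), hxy.le, le_rfl⟩ : Flag3 P)) =
            e3 R (⟨(φ x, φ x, φ y), le_rfl, h.le⟩ : Flag3 Q) +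
              e3 R (⟨(φ x, φ y, φ y), h.le, le_rfl⟩ : Flag3 Q) + σ :=
  iso_image_of_cover_idempotent_with_bijection_general hR Φ hΦ φ hφ
end

section
/- Let P and Q be finite posets and R an indecomposable commutative unital ring. If there exists an isomorphism of R-algebras I^3(P,R) → I^3(Q,R), then P and Q are isomorphic as posets. -/
/-!
The diagonal `f ↦ (x ↦ f (x, x, x))` is a multiplicative map from `I³(P, R)` onto the commutative
algebra `R^P`, and its kernel is the span of the commutators. An isomorphism `Φ` of flag algebras
therefore induces an algebra isomorphism `R^P ≃ R^Q`, and since `R` has no nontrivial idempotents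
every character of `R^P` is an evaluation, so this isomorphism is precomposition with a bijection
`σ : Q ≃ P`. The order is then recovered multiplicatively: `g = Φ e_x` satisfies
`(g e_y) g = g` for `y = σ⁻¹ x`, which confines `g` to flags with middle point `y`, and for `x ≤ x'`
the nonzero product `(e_x e_{(x,x,x')}) (e_{(x,x',x')} e_{x'})` is carried by `Φ` to a nonzero
product that forces `σ⁻¹ x ≤ σ⁻¹ x'`.
-/

open Finset

namespace FlagIncidence

local infixl:70 " ⋆ " => mul3 _ _

section Basic

variable {P R : Type*} [PartialOrder P] [CommRing R]

open Classical in
/-- Extension by zero to all triples, so that sums over intervals need no membership proofs. -/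
noncomputable def zeroExt (f : Flag3 P → R) (a b c : P) : R :=
  if h : a ≤ b ∧ b ≤ c then f ⟨(a, b, c), h⟩ else 0

lemma zeroExt_of_le (f : Flag3 P → R) {a b c : P} (h : a ≤ b ∧ b ≤ c) :
    zeroExt f a b c = f ⟨(a, b, c), h⟩ :=
  dif_pos h

lemma zeroExt_of_not_le (f : Flag3 P → R) {a b c : P} (h : ¬(a ≤ b ∧ b ≤ c)) :
    zeroExt f a b c = 0 :=
  dif_neg h

lemma zeroExt_injective : Function.Injective (zeroExt : (Flag3 P → R) → P → P → P → R) := by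
  intro f g hfg
  funext ⟨⟨a, b, c⟩, h⟩
  rw [← zeroExt_of_le f h, ← zeroExt_of_le g h, hfg]

lemma exists_zeroExt_ne_zero {f : Flag3 P → R} (hf : f ≠ 0) : ∃ a b c, zeroExt f a b c ≠ 0 := by
  obtain ⟨⟨⟨a, b, c⟩, h⟩, hne⟩ := Function.ne_iff.mp hf
  exact ⟨a, b, c, by rwa [zeroExt_of_le f h]⟩

lemma zeroExt_zero (a b c : P) : zeroExt (0 : Flag3 P → R) a b c = 0 := by
  by_cases h : a ≤ b ∧ b ≤ c
  · rw [zeroExt_of_le _ h, Pi.zero_apply]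
  · rw [zeroExt_of_not_le _ h]

lemma zeroExt_smul (r : R) (f : Flag3 P → R) (a b c : P) :
    zeroExt (r • f) a b c = r * zeroExt f a b c := by
  by_cases h : a ≤ b ∧ b ≤ c
  · rw [zeroExt_of_le _ h, zeroExt_of_le _ h, Pi.smul_apply, smul_eq_mul]
  · rw [zeroExt_of_not_le _ h, zeroExt_of_not_le _ h, mul_zero]

variable [DecidableEq P]

lemma zeroExt_e3 (t : Flag3 P) (a b c : P) :
    zeroExt (e3 R t) a b c = if (a, b, c) = t.1 then 1 else 0 := by
  by_cases h : a ≤ b ∧ b ≤ c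
  · simp only [zeroExt_of_le _ h, e3, ← Subtype.val_inj]
  · rw [zeroExt_of_not_le _ h, if_neg]
    intro he
    have ht := t.2
    rw [← he] at ht
    exact h ht

lemma smul_e3 (r : R) (t : Flag3 P) : r • e3 R t = Pi.single t r := by
  funext t'
  simp [e3, Pi.single_apply]

def diagFlag (x : P) : Flag3 P := ⟨(x, x, x), le_rfl, le_rfl⟩

variable (P R) in
def diag : (Flag3 P → R) →ₗ[R] (P → R) := LinearMap.funLeft R R diagFlag

variable (P R) in
def diagEmb : (P → R) →ₗ[R] (Flag3 P → R) where
  toFun ψ t := if t.1.1 = t.1.2.1 ∧ t.1.2.1 = t.1.2.2 then ψ t.1.1 else 0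
  map_add' ψ ψ' := by
    funext t
    split_ifs <;> simp [*]
  map_smul' r ψ := by
    funext t
    split_ifs <;> simp [*]

lemma zeroExt_diagEmb (ψ : P → R) (a b c : P) :
    zeroExt (diagEmb P R ψ) a b c = if a = b ∧ b = c then ψ a else 0 := by
  by_cases h : a ≤ b ∧ b ≤ c
  · exact zeroExt_of_le _ h
  · rw [zeroExt_of_not_le _ h, if_neg]
    rintro ⟨rfl, rfl⟩
    exact h ⟨le_rfl, le_rfl⟩

lemma diag_diagEmb (ψ : P → R) : diag P R (diagEmb P R ψ) = ψ := by
  funext x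
  simp [diag, diagEmb, diagFlag]

end Basic

section Mul

variable {P R : Type*} [PartialOrder P] [LocallyFiniteOrder P] [CommRing R]

lemma zeroExt_mul3 (f g : Flag3 P → R) (a b c : P) :
    zeroExt (f ⋆ g) a b c = ∑ u ∈ Icc a b, ∑ v ∈ Icc b c, zeroExt f a u v * zeroExt g u v c := by
  by_cases h : a ≤ b ∧ b ≤ c
  · rw [zeroExt_of_le _ h, ← sum_product', ← sum_attach]
    refine sum_congr rfl fun p _ => ?_
    obtain ⟨hu, hv⟩ := mem_product.mp p.2
    rw [mem_Icc] at hu hv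
    rw [zeroExt_of_le f ⟨hu.1, hu.2.trans hv.1⟩, zeroExt_of_le g ⟨hu.2.trans hv.1, hv.2⟩]
  · rw [zeroExt_of_not_le _ h]
    rcases not_and_or.mp h with hab | hbc
    · rw [Icc_eq_empty hab, sum_empty]
    · simp only [Icc_eq_empty hbc, sum_empty, sum_const_zero]

lemma exists_of_zeroExt_mul3_ne_zero {f g : Flag3 P → R} {a b c : P}
    (h : zeroExt (f ⋆ g) a b c ≠ 0) :
    ∃ u v, u ≤ b ∧ b ≤ v ∧ zeroExt f a u v ≠ 0 ∧ zeroExt g u v c ≠ 0 := by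
  rw [zeroExt_mul3] at h
  obtain ⟨u, hu, h⟩ := exists_ne_zero_of_sum_ne_zero h
  obtain ⟨v, hv, h⟩ := exists_ne_zero_of_sum_ne_zero h
  exact ⟨u, v, (mem_Icc.mp hu).2, (mem_Icc.mp hv).1, left_ne_zero_of_mul h,
    right_ne_zero_of_mul h⟩

lemma diag_mul3 (f g : Flag3 P → R) : diag P R (f ⋆ g) = diag P R f * diag P R g := by
  funext x
  have := zeroExt_mul3 f g x x x
  simp only [Icc_self, sum_singleton, zeroExt_of_le _ (⟨le_rfl, le_rfl⟩ : x ≤ x ∧ x ≤ x)] at this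
  exact this

variable [DecidableEq P]

lemma zeroExt_diagEmb_mul3 (ψ : P → R) (f : Flag3 P → R) (a b c : P) :
    zeroExt (diagEmb P R ψ ⋆ f) a b c = if a = b then ψ a * zeroExt f a b c else 0 := by
  have hterm (u v : P) : zeroExt (diagEmb P R ψ) a u v * zeroExt f u v c =
      if u = a ∧ v = a then ψ a * zeroExt f a a c else 0 := by
    rw [zeroExt_diagEmb]
    split_ifs <;> grind
  simp only [zeroExt_mul3, hterm, ite_and, sum_ite_irrel, sum_ite_eq', mem_Icc, sum_const_zero,
    le_refl, true_and]
  split_ifs <;> grind [zeroExt_of_not_le]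

lemma zeroExt_mul3_diagEmb (f : Flag3 P → R) (ψ : P → R) (a b c : P) :
    zeroExt (f ⋆ diagEmb P R ψ) a b c = if b = c then zeroExt f a b c * ψ c else 0 := by
  have hterm (u v : P) : zeroExt f a u v * zeroExt (diagEmb P R ψ) u v c =
      if u = c ∧ v = c then zeroExt f a c c * ψ c else 0 := by
    rw [zeroExt_diagEmb]
    split_ifs <;> grind
  simp only [zeroExt_mul3, hterm, ite_and, sum_ite_irrel, sum_ite_eq', mem_Icc, sum_const_zero,
    le_refl, and_true]
  split_ifs <;> grind [zeroExt_of_not_le]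

lemma zeroExt_e3_mul3_e3 {a₀ u₀ v₀ c₀ : P} (hs : a₀ ≤ u₀ ∧ u₀ ≤ v₀) (ht : u₀ ≤ v₀ ∧ v₀ ≤ c₀)
    (a b c : P) :
    zeroExt (e3 R ⟨(a₀, u₀, v₀), hs⟩ ⋆ e3 R ⟨(u₀, v₀, c₀), ht⟩) a b c =
      if a = a₀ ∧ c = c₀ ∧ b ∈ Icc u₀ v₀ then 1 else 0 := by
  have hterm (u v : P) :
      zeroExt (e3 R ⟨(a₀, u₀, v₀), hs⟩) a u v * zeroExt (e3 R ⟨(u₀, v₀, c₀), ht⟩) u v c =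
        if u = u₀ ∧ v = v₀ then (if a = a₀ ∧ c = c₀ then 1 else 0) else 0 := by
    simp only [zeroExt_e3, Prod.mk.injEq]
    split_ifs <;> grind
  simp only [zeroExt_mul3, hterm, ite_and, sum_ite_irrel, sum_ite_eq', mem_Icc, sum_const_zero]
  split_ifs <;> grind

lemma e3_mul3_e3_eq_zero {s t : Flag3 P} (hst : s.1.2 ≠ (t.1.1, t.1.2.1)) :
    e3 R s ⋆ e3 R t = 0 := by
  refine zeroExt_injective (funext₃ fun a b c => ?_)
  rw [zeroExt_mul3, zeroExt_zero]
  refine sum_eq_zero fun u _ => sum_eq_zero fun v _ => ?_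
  simp only [zeroExt_e3]
  split_ifs <;> grind

lemma e3_mul3_e3_of_le {a b d : P} (hab : a ≤ b) (hbd : b ≤ d) :
    e3 R ⟨(a, b, b), hab, le_rfl⟩ ⋆ e3 R ⟨(b, b, d), le_rfl, hbd⟩ = e3 R ⟨(a, b, d), hab, hbd⟩ := by
  refine zeroExt_injective (funext₃ fun α β γ => ?_)
  rw [zeroExt_e3_mul3_e3, zeroExt_e3, Icc_self]
  simp only [mem_singleton, Prod.mk.injEq]
  split_ifs <;> grind

lemma diagEmb_mul3_diagEmb (ψ ψ' : P → R) :
    diagEmb P R ψ ⋆ diagEmb P R ψ' = diagEmb P R (ψ * ψ') := by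
  refine zeroExt_injective (funext₃ fun a b c => ?_)
  rw [zeroExt_diagEmb_mul3, zeroExt_diagEmb, zeroExt_diagEmb]
  split_ifs <;> simp_all

end Mul

section Kernel

variable {P R : Type*} [PartialOrder P] [Fintype P] [DecidableEq P] [LocallyFiniteOrder P]
  [CommRing R]

/-- Off the diagonal, `e_(a,b,d) = e_(a,b,b) e_(b,b,d) - e_(b,b,d) e_(a,b,b)`. -/
theorem ker_diag_eq_commSub : LinearMap.ker (diag P R) = commSub P R ⊤ ⊤ := by
  refine le_antisymm (fun f hf => ?_) (Submodule.span_le.mpr ?_)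
  · have := Fintype.ofFinite (Flag3 P)
    rw [← Finset.univ_sum_single f]
    simp only [← smul_e3]
    refine Submodule.sum_mem _ fun ⟨⟨a, b, d⟩, hab, hbd⟩ _ => ?_
    by_cases hconst : a = b ∧ b = d
    · obtain ⟨rfl, rfl⟩ := hconst
      have : f (diagFlag a) = 0 := congrFun (LinearMap.mem_ker.mp hf) a
      rw [diagFlag] at this
      rw [this, zero_smul]
      exact Submodule.zero_mem _
    · refine Submodule.smul_mem _ _ (Submodule.subset_span ?_)
      refine ⟨e3 R ⟨(a, b, b), hab, le_rfl⟩, trivial, e3 R ⟨(b, b, d), le_rfl, hbd⟩, trivial, ?_⟩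
      rw [e3_mul3_e3_of_le hab hbd, e3_mul3_e3_eq_zero (by grind), sub_zero]
  · rintro _ ⟨f, -, g, -, rfl⟩
    rw [SetLike.mem_coe, LinearMap.mem_ker, map_sub, diag_mul3, diag_mul3, mul_comm, sub_self]

end Kernel

section Transport

variable {P Q R : Type*} [PartialOrder P] [LocallyFiniteOrder P] [PartialOrder Q]
  [LocallyFiniteOrder Q] [CommRing R]

lemma map_commSub_le (Φ : (Flag3 P → R) →ₗ[R] (Flag3 Q → R))
    (hΦ : ∀ f g : Flag3 P → R, Φ (f ⋆ g) = Φ f ⋆ Φ g) (U V : Submodule R (Flag3 P → R)) :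
    (commSub P R U V).map Φ ≤ commSub Q R (U.map Φ) (V.map Φ) := by
  refine (Submodule.map_span_le _ _ _).mpr ?_
  rintro _ ⟨f, hf, g, hg, rfl⟩
  refine Submodule.subset_span ⟨Φ f, Submodule.mem_map_of_mem hf, Φ g,
    Submodule.mem_map_of_mem hg, ?_⟩
  rw [map_sub, hΦ, hΦ]

lemma map_mul3_symm (Φ : (Flag3 P → R) ≃ₗ[R] (Flag3 Q → R))
    (hΦ : ∀ f g : Flag3 P → R, Φ (f ⋆ g) = Φ f ⋆ Φ g) (f g : Flag3 Q → R) :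
    Φ.symm (f ⋆ g) = Φ.symm f ⋆ Φ.symm g :=
  Φ.injective (by rw [hΦ, Φ.apply_symm_apply, Φ.apply_symm_apply, Φ.apply_symm_apply])

variable [Fintype P] [DecidableEq P] [Fintype Q] [DecidableEq Q]

lemma diag_map_eq_zero (Φ : (Flag3 P → R) ≃ₗ[R] (Flag3 Q → R))
    (hΦ : ∀ f g : Flag3 P → R, Φ (f ⋆ g) = Φ f ⋆ Φ g) {f : Flag3 P → R} (hf : diag P R f = 0) :
    diag Q R (Φ f) = 0 := by
  have hf' : f ∈ commSub P R ⊤ ⊤ := by rwa [← ker_diag_eq_commSub, LinearMap.mem_ker]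
  have := map_commSub_le Φ.toLinearMap hΦ ⊤ ⊤ (Submodule.mem_map_of_mem hf')
  rwa [Submodule.map_top, LinearEquiv.range, ← ker_diag_eq_commSub] at this

lemma diag_map_diagEmb_diag (Φ : (Flag3 P → R) ≃ₗ[R] (Flag3 Q → R))
    (hΦ : ∀ f g : Flag3 P → R, Φ (f ⋆ g) = Φ f ⋆ Φ g) (f : Flag3 P → R) :
    diag Q R (Φ (diagEmb P R (diag P R f))) = diag Q R (Φ f) := by
  rw [← sub_eq_zero, ← map_sub, ← map_sub]
  exact diag_map_eq_zero Φ hΦ (by rw [map_sub, diag_diagEmb, sub_self])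

variable (R) in
def diagLinearEquiv (Φ : (Flag3 P → R) ≃ₗ[R] (Flag3 Q → R))
    (hΦ : ∀ f g : Flag3 P → R, Φ (f ⋆ g) = Φ f ⋆ Φ g) : (P → R) ≃ₗ[R] (Q → R) where
  toFun ψ := diag Q R (Φ (diagEmb P R ψ))
  invFun ψ := diag P R (Φ.symm (diagEmb Q R ψ))
  map_add' ψ ψ' := by simp only [map_add]
  map_smul' r ψ := by simp only [map_smul, RingHom.id_apply]
  left_inv ψ := by
    dsimp only
    rw [diag_map_diagEmb_diag Φ.symm (map_mul3_symm Φ hΦ), Φ.symm_apply_apply, diag_diagEmb]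
  right_inv ψ := by
    dsimp only
    rw [diag_map_diagEmb_diag Φ hΦ, Φ.apply_symm_apply, diag_diagEmb]

lemma diagLinearEquiv_mul (Φ : (Flag3 P → R) ≃ₗ[R] (Flag3 Q → R))
    (hΦ : ∀ f g : Flag3 P → R, Φ (f ⋆ g) = Φ f ⋆ Φ g) (ψ ψ' : P → R) :
    diagLinearEquiv R Φ hΦ (ψ * ψ') = diagLinearEquiv R Φ hΦ ψ * diagLinearEquiv R Φ hΦ ψ' := by
  change diag Q R (Φ (diagEmb P R (ψ * ψ'))) = _
  rw [← diagEmb_mul3_diagEmb, hΦ, diag_mul3]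
  rfl

variable (R) in
def diagAlgEquiv (Φ : (Flag3 P → R) ≃ₗ[R] (Flag3 Q → R))
    (hΦ : ∀ f g : Flag3 P → R, Φ (f ⋆ g) = Φ f ⋆ Φ g) : (P → R) ≃ₐ[R] (Q → R) :=
  AlgEquiv.ofLinearEquiv (diagLinearEquiv R Φ hΦ)
    (MulEquiv.map_one ⟨(diagLinearEquiv R Φ hΦ).toEquiv, diagLinearEquiv_mul Φ hΦ⟩)
    (diagLinearEquiv_mul Φ hΦ)

end Transport

section Characters

variable {P Q R : Type*} [DecidableEq P] [DecidableEq Q] [CommRing R] [Nontrivial R]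

lemma evalAlgHom_injective : Function.Injective (Pi.evalAlgHom R (fun _ : P => R)) := by
  intro x x' h
  have := congrArg (fun φ : (P → R) →ₐ[R] R => φ (Pi.single x 1)) h
  by_contra hne
  simp [Ne.symm hne] at this

variable [Fintype P] [Fintype Q]

lemma exists_eq_evalAlgHom (hR : ∀ r : R, r * r = r → r = 0 ∨ r = 1)
    (φ : (P → R) →ₐ[R] R) : ∃ x, φ = Pi.evalAlgHom R (fun _ => R) x := by
  have hφ := (CompleteOrthogonalIdempotents.single (fun _ : P => R)).map φ.toRingHom
  obtain ⟨x, hx⟩ : ∃ x, φ (Pi.single x 1) = 1 := by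
    by_contra! h
    have := hφ.complete
    rw [sum_eq_zero fun x _ => (hR _ (hφ.idem x)).resolve_right (h x)] at this
    exact zero_ne_one this
  have hsingle (i : P) : φ (Pi.single i 1) = (Pi.single x 1 : P → R) i := by
    by_cases hi : i = x
    · subst hi
      rw [hx, Pi.single_eq_same]
    · calc φ (Pi.single i 1) = φ (Pi.single x 1) * φ (Pi.single i 1) := by rw [hx, one_mul]
        _ = 0 := hφ.ortho (Ne.symm hi)
        _ = (Pi.single x 1 : P → R) i := by rw [Pi.single_eq_of_ne hi]
  refine ⟨x, AlgHom.toLinearMap_injective (LinearMap.pi_ext fun i r => ?_)⟩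
  have : Pi.single i r = r • Pi.single i (1 : R) := by
    rw [← Pi.single_smul', smul_eq_mul, mul_one]
  simp [this, hsingle, Pi.single_apply, eq_comm]

lemma exists_equiv_apply_eq_comp (hR : ∀ r : R, r * r = r → r = 0 ∨ r = 1)
    (e : (P → R) ≃ₐ[R] (Q → R)) : ∃ σ : Q ≃ P, ∀ f, e f = f ∘ σ := by
  choose σ hσ using fun y : Q =>
    exists_eq_evalAlgHom hR ((Pi.evalAlgHom R (fun _ => R) y).comp e.toAlgHom)
  choose τ hτ using fun x : P =>
    exists_eq_evalAlgHom hR ((Pi.evalAlgHom R (fun _ => R) x).comp e.symm.toAlgHom)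
  have he (f : P → R) (y : Q) : e f y = f (σ y) := AlgHom.congr_fun (hσ y) f
  have he' (g : Q → R) (x : P) : e.symm g x = g (τ x) := AlgHom.congr_fun (hτ x) g
  refine ⟨⟨σ, τ, fun y => ?_, fun x => ?_⟩, fun f => funext (he f)⟩
  · refine evalAlgHom_injective (R := R) (AlgHom.ext fun g => ?_)
    simp [← he', ← he]
  · refine evalAlgHom_injective (R := R) (AlgHom.ext fun f => ?_)
    simp [← he', ← he]

end Characters

section Monotone

variable {P R : Type*} [PartialOrder P] [LocallyFiniteOrder P] [DecidableEq P] [CommRing R]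

lemma diagEmb_single_mul3_mul3 (u : Flag3 P → R) (x : P) :
    (diagEmb P R (Pi.single x 1) ⋆ u) ⋆ diagEmb P R (Pi.single x 1) =
      diag P R u x • diagEmb P R (Pi.single x 1) := by
  refine zeroExt_injective (funext₃ fun a b c => ?_)
  rw [zeroExt_mul3_diagEmb, zeroExt_diagEmb_mul3, zeroExt_smul, zeroExt_diagEmb]
  by_cases h : a = b ∧ b = c
  · obtain ⟨rfl, rfl⟩ := h
    by_cases hx : a = x
    · subst hx
      simp [zeroExt_of_le _ (⟨le_rfl, le_rfl⟩ : a ≤ a ∧ a ≤ a), diag, diagFlag]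
    · simp [hx]
  · grind

lemma middle_eq_of_mul3_mul3_eq_self {g : Flag3 P → R} {y : P}
    (hg : (g ⋆ diagEmb P R (Pi.single y 1)) ⋆ g = g) {a b c : P} (h : zeroExt g a b c ≠ 0) :
    b = y := by
  rw [← hg] at h
  obtain ⟨u, v, hub, hbv, huv, -⟩ := exists_of_zeroExt_mul3_ne_zero h
  rw [zeroExt_mul3_diagEmb] at huv
  split_ifs at huv with h_eq
  · subst h_eq
    have hy : (Pi.single y 1 : P → R) u ≠ 0 := right_ne_zero_of_mul huv
    rw [le_antisymm hbv hub]
    by_contra hne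
    exact hy (Pi.single_eq_of_ne hne _)
  · exact absurd rfl huv

lemma le_of_mul3_ne_zero {g g' h h' : Flag3 P → R} {y y' : P}
    (hg : (g ⋆ diagEmb P R (Pi.single y 1)) ⋆ g = g)
    (hg' : (g' ⋆ diagEmb P R (Pi.single y' 1)) ⋆ g' = g')
    (hne : (g ⋆ h) ⋆ (h' ⋆ g') ≠ 0) : y ≤ y' := by
  obtain ⟨a, b, c, habc⟩ := exists_zeroExt_ne_zero hne
  obtain ⟨u, v, hub, hbv, hl, hr⟩ := exists_of_zeroExt_mul3_ne_zero habc
  obtain ⟨p, _, hpu, -, hp, -⟩ := exists_of_zeroExt_mul3_ne_zero hl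
  obtain ⟨_, q, -, hvq, -, hq⟩ := exists_of_zeroExt_mul3_ne_zero hr
  calc y = p := (middle_eq_of_mul3_mul3_eq_self hg hp).symm
    _ ≤ q := hpu.trans (hub.trans (hbv.trans hvq))
    _ = y' := middle_eq_of_mul3_mul3_eq_self hg' hq

lemma exists_mul3_ne_zero_of_le [Nontrivial R] {x x' : P} (hxx' : x ≤ x') :
    ∃ h h' : Flag3 P → R,
      (diagEmb P R (Pi.single x 1) ⋆ h) ⋆ (h' ⋆ diagEmb P R (Pi.single x' 1)) ≠ 0 := by
  refine ⟨e3 R ⟨(x, x, x'), le_rfl, hxx'⟩, e3 R ⟨(x, x', x'), hxx', le_rfl⟩, ?_⟩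
  have hl : diagEmb P R (Pi.single x 1) ⋆ e3 R ⟨(x, x, x'), le_rfl, hxx'⟩ =
      e3 R ⟨(x, x, x'), le_rfl, hxx'⟩ := by
    refine zeroExt_injective (funext₃ fun a b c => ?_)
    rw [zeroExt_diagEmb_mul3, zeroExt_e3]
    split_ifs <;> simp_all
  have hr : e3 R ⟨(x, x', x'), hxx', le_rfl⟩ ⋆ diagEmb P R (Pi.single x' 1) =
      e3 R ⟨(x, x', x'), hxx', le_rfl⟩ := by
    refine zeroExt_injective (funext₃ fun a b c => ?_)
    rw [zeroExt_mul3_diagEmb, zeroExt_e3]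
    split_ifs <;> simp_all
  rw [hl, hr]
  intro h0
  have := congrArg (fun f => zeroExt f x x x') h0
  simp [zeroExt_e3_mul3_e3, zeroExt_zero, hxx'] at this

variable {Q : Type*} [PartialOrder Q] [LocallyFiniteOrder Q] [DecidableEq Q] [Nontrivial R]

lemma monotone_of_diag_symm_eq_one (Φ : (Flag3 P → R) ≃ₗ[R] (Flag3 Q → R))
    (hΦ : ∀ f g : Flag3 P → R, Φ (f ⋆ g) = Φ f ⋆ Φ g) {τ : P → Q}
    (hτ : ∀ x, diag P R (Φ.symm (diagEmb Q R (Pi.single (τ x) 1))) x = 1) : Monotone τ := by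
  have hidem (x : P) : (Φ (diagEmb P R (Pi.single x 1)) ⋆ diagEmb Q R (Pi.single (τ x) 1)) ⋆
      Φ (diagEmb P R (Pi.single x 1)) = Φ (diagEmb P R (Pi.single x 1)) := by
    rw [← Φ.apply_symm_apply (diagEmb Q R _), ← hΦ, ← hΦ, diagEmb_single_mul3_mul3, hτ, one_smul]
  intro x x' hxx'
  obtain ⟨h, h', hne⟩ := exists_mul3_ne_zero_of_le (R := R) hxx'
  refine le_of_mul3_ne_zero (hidem x) (hidem x') (h := Φ h) (h' := Φ h') ?_
  rwa [← hΦ, ← hΦ, ← hΦ, Φ.map_ne_zero_iff]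

end Monotone

end FlagIncidence

/-- If `I^3(P,R) ≅ I^3(Q,R)` for finite posets `P`, `Q` over an
indecomposable commutative ring `R`, then `P ≅ Q` as posets. -/
theorem poset_iso_of_flag_algebra_iso
    {P Q R : Type*} [PartialOrder P] [Fintype P] [DecidableEq P] [LocallyFiniteOrder P]
    [PartialOrder Q] [Fintype Q] [DecidableEq Q] [LocallyFiniteOrder Q]
    [CommRing R] [Nontrivial R] (hR : ∀ r : R, r * r = r → r = 0 ∨ r = 1)
    (h : ∃ Φ : (Flag3 P → R) ≃ₗ[R] (Flag3 Q → R),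
      ∀ f g : Flag3 P → R, Φ (mul3 P R f g) = mul3 Q R (Φ f) (Φ g)) :
    Nonempty (P ≃o Q) := by
  obtain ⟨Φ, hΦ⟩ := h
  set e := FlagIncidence.diagAlgEquiv R Φ hΦ
  obtain ⟨σ, hσ⟩ := FlagIncidence.exists_equiv_apply_eq_comp hR e
  have hσ_symm (g : Q → R) : e.symm g = g ∘ σ.symm :=
    e.symm_apply_eq.mpr (by rw [hσ]; funext; simp)
  refine ⟨σ.symm.toOrderIso (FlagIncidence.monotone_of_diag_symm_eq_one Φ hΦ fun x => ?_)
    (FlagIncidence.monotone_of_diag_symm_eq_one Φ.symm (FlagIncidence.map_mul3_symm Φ hΦ)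
      fun y => ?_)⟩
  · exact (congrFun (hσ_symm _) x).trans (by simp)
  · exact (congrFun (hσ _) y).trans (by simp)
end

section
/- Let P be a finite poset, R a commutative unital ring and i ≥ 0. If f, g ∈ J^3_i(P,R) and x ≤ y ≤ z in P with l(x,z) = i, then (fg)(x,y,z) = f(x,x,z)·g(x,z,z). -/
/-! In a sum `Σ f(x,u,v) g(u,v,z)` over `x ≤ u ≤ y ≤ v ≤ z`, every term other than `(u,v) = (x,z)`
has `u > x` or `v < z`. Adjoining `x` below `[u,z]` (resp. `z` above `[x,v]`) lengthens every
chain, so `l(u,z) < l(x,z) = i` or `l(x,v) < l(x,z) = i`, and `g(u,v,z) = 0` resp. `f(x,u,v) = 0`. -/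

theorem Set.chainHeight_add_one_le_chainHeight_insert {α : Type*} {r : α → α → Prop}
    {s : Set α} {a : α} (ha : a ∉ s) (hr : ∀ b ∈ s, r a b ∨ r b a) :
    s.chainHeight r + 1 ≤ (insert a s).chainHeight r := by
  have : Nonempty {t // t ⊆ s ∧ IsChain r t} := ⟨⟨∅, empty_subset _, IsChain.empty⟩⟩
  rw [chainHeight_eq_iSup, ENat.iSup_add]
  refine iSup_le fun t => ?_
  rw [← encard_insert_of_notMem fun h => ha (t.2.1 h)]
  exact encard_le_chainHeight_of_isChain _ _ (insert_subset_insert t.2.1)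
    (t.2.2.insert fun b hb _ => hr b (t.2.1 hb))

section Length

variable {P : Type*} [PartialOrder P]

theorem ell_lt_ell_of_chainHeight_add_one_le {x z u w : P} (huw : u ≤ w)
    (h : (Set.Icc u w).chainHeight (· < ·) + 1 ≤ (Set.Icc x z).chainHeight (· < ·))
    (hfin : ell x z ≠ ⊤) : ell u w < ell x z := by
  have hxz : (Set.Icc x z).chainHeight (· < ·) ≠ ⊤ := fun htop => hfin (by simp [ell, htop])
  have huw_fin : (Set.Icc u w).chainHeight (· < ·) ≠ ⊤ :=
    ne_top_of_le_ne_top hxz (le_trans le_self_add h)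
  have hone : 1 ≤ (Set.Icc u w).chainHeight (· < ·) :=
    (Set.one_le_chainHeight_iff _ _).2 ⟨u, le_rfl, huw⟩
  exact (ENat.addLECancellable_of_ne_top ENat.one_ne_top).tsub_lt_tsub_right_of_le hone
    ((ENat.add_one_le_iff huw_fin).1 h)

theorem ell_lt_ell_of_lt_left {x u z : P} (hxu : x < u) (huz : u ≤ z) (hfin : ell x z ≠ ⊤) :
    ell u z < ell x z := by
  refine ell_lt_ell_of_chainHeight_add_one_le huz ?_ hfin
  refine (Set.chainHeight_add_one_le_chainHeight_insert (fun h => h.1.not_gt hxu)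
    fun b hb => Or.inl (hxu.trans_le hb.1)).trans (Set.chainHeight_mono _ _ _ ?_)
  exact Set.insert_subset ⟨le_rfl, hxu.le.trans huz⟩ (Set.Icc_subset_Icc_left hxu.le)

theorem ell_lt_ell_of_lt_right {x v z : P} (hxv : x ≤ v) (hvz : v < z) (hfin : ell x z ≠ ⊤) :
    ell x v < ell x z := by
  refine ell_lt_ell_of_chainHeight_add_one_le hxv ?_ hfin
  refine (Set.chainHeight_add_one_le_chainHeight_insert (fun h => h.2.not_gt hvz)
    fun b hb => Or.inr (hb.2.trans_lt hvz)).trans (Set.chainHeight_mono _ _ _ ?_)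
  exact Set.insert_subset ⟨hxv.trans hvz.le, le_rfl⟩ (Set.Icc_subset_Icc_right hvz.le)

end Length

theorem mul3_apply_of_mem_J3_general
    {P R : Type*} [PartialOrder P] [LocallyFiniteOrder P]
    [CommRing R] (i : ℕ) {f g : Flag3 P → R}
    (hf : f ∈ J3 P R i) (hg : g ∈ J3 P R i)
    {x y z : P} (hxy : x ≤ y) (hyz : y ≤ z) (hl : ell x z = (i : ℕ∞)) :
    mul3 P R f g ⟨(x, y, z), hxy, hyz⟩ =
      f ⟨(x, x, z), le_rfl, hxy.trans hyz⟩ * g ⟨(x, z, z), hxy.trans hyz, le_rfl⟩ := by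
  have hfin : ell x z ≠ ⊤ := hl ▸ ENat.natCast_ne_top i
  have hmem : (x, z) ∈ Finset.Icc x y ×ˢ Finset.Icc y z := by simp [hxy, hyz]
  rw [mul3, Finset.sum_eq_single_of_mem ⟨(x, z), hmem⟩ (Finset.mem_attach _ _)]
  rintro ⟨⟨u, v⟩, huv⟩ - hne
  obtain ⟨⟨hxu, huy⟩, hyv, hvz⟩ : (x ≤ u ∧ u ≤ y) ∧ y ≤ v ∧ v ≤ z := by simpa using huv
  rcases hxu.eq_or_lt with rfl | hxu
  · have hvz : v < z := hvz.lt_of_ne (by rintro rfl; exact hne rfl)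
    exact mul_eq_zero_of_left (hf _ (hl ▸ ell_lt_ell_of_lt_right (hxy.trans hyv) hvz hfin)) _
  · exact mul_eq_zero_of_right _
      (hg _ (hl ▸ ell_lt_ell_of_lt_left hxu (huy.trans (hyv.trans hvz)) hfin))

/-- If `f, g ∈ J^3_i(P,R)` and `x ≤ y ≤ z` with `l(x,z) = i`, then
`(fg)(x,y,z) = f(x,x,z)·g(x,z,z)`. -/
theorem mul3_apply_of_mem_J3
    {P R : Type*} [PartialOrder P] [Fintype P] [DecidableEq P] [LocallyFiniteOrder P]
    [CommRing R] (i : ℕ) {f g : Flag3 P → R}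
    (hf : f ∈ J3 P R i) (hg : g ∈ J3 P R i)
    {x y z : P} (hxy : x ≤ y) (hyz : y ≤ z) (hl : ell x z = (i : ℕ∞)) :
    mul3 P R f g ⟨(x, y, z), hxy, hyz⟩ =
      f ⟨(x, x, z), le_rfl, hxy.trans hyz⟩ * g ⟨(x, z, z), hxy.trans hyz, le_rfl⟩ :=
  mul3_apply_of_mem_J3_general i hf hg hxy hyz hl
end

section
/- Let P be a finite poset, R a commutative unital ring, i ≥ 0, f ∈ J^3_i(P,R) and x ≤ y ≤ z in P. If x < y then e_{xyz}·f ∈ J^3_{i+1}(P,R), and if y < z then f·e_{xyz} ∈ J^3_{i+1}(P,R). -/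
/-!
In `(e_{xyz} f)(a,b,c)` the only summand that can survive is the one with `(a,u,v) = (x,y,z)`,
and it equals `f(y,z,c)`. Prepending `x < y` to a chain of `[y,c]` gives `l(y,c) + 1 ≤ l(x,c)`,
so `l(x,c) < i + 1` forces `l(y,c) < i` and `f(y,z,c) = 0`. Symmetrically, for `f e_{xyz}` with
`y < z`, appending `z` to a chain of `[a,y]` gives `l(a,y) + 1 ≤ l(a,z)`.
-/

theorem Set.chainHeight_add_one_le_of_insert_subset {α : Type*} {r : α → α → Prop}
    {s t : Set α} {a : α} (ha : a ∉ s) (hr : ∀ b ∈ s, r a b ∨ r b a) (hst : insert a s ⊆ t) :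
    s.chainHeight r + 1 ≤ t.chainHeight r := by
  by_cases htop : s.chainHeight r = ⊤
  · rw [htop, top_add, top_le_iff, eq_top_iff, ← htop]
    exact Set.chainHeight_mono r s t ((Set.subset_insert a s).trans hst)
  obtain ⟨c, hcs, hc, hchain⟩ := s.exists_eq_chainHeight_of_chainHeight_ne_top r htop
  have hac : a ∉ c := fun h => ha (hcs h)
  rw [← hc, ← Set.encard_insert_of_notMem hac]
  exact Set.encard_le_chainHeight_of_isChain _ _ ((Set.insert_subset_insert hcs).trans hst)
    (hchain.insert fun b hb _ => hr b (hcs hb))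

section Ell

variable {P : Type*} [PartialOrder P]

theorem ell_add_one_le_of_insert_subset {x y x' y' a : P} (hxy : x ≤ y)
    (ha : a ∉ Set.Icc x y) (hr : ∀ b ∈ Set.Icc x y, a < b ∨ b < a)
    (hsub : insert a (Set.Icc x y) ⊆ Set.Icc x' y') :
    ell x y + 1 ≤ ell x' y' := by
  have hne : 1 ≤ (Set.Icc x y).chainHeight (· < ·) :=
    (Set.one_le_chainHeight_iff _ _).mpr (Set.nonempty_Icc.mpr hxy)
  unfold ell
  rw [tsub_add_cancel_of_le hne]
  exact ENat.le_sub_of_add_le_right ENat.one_ne_top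
    (Set.chainHeight_add_one_le_of_insert_subset ha hr hsub)

theorem ell_add_one_le_of_lt_of_le {x y z : P} (hxy : x < y) (hyz : y ≤ z) :
    ell y z + 1 ≤ ell x z :=
  ell_add_one_le_of_insert_subset hyz (fun h => hxy.not_ge h.1)
    (fun _ hb => Or.inl (hxy.trans_le hb.1))
    (Set.insert_subset ⟨le_rfl, hxy.le.trans hyz⟩ (Set.Icc_subset_Icc_left hxy.le))

theorem ell_add_one_le_of_le_of_lt {x y z : P} (hxy : x ≤ y) (hyz : y < z) :
    ell x y + 1 ≤ ell x z :=
  ell_add_one_le_of_insert_subset hxy (fun h => hyz.not_ge h.2)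
    (fun _ hb => Or.inr (hb.2.trans_lt hyz))
    (Set.insert_subset ⟨hxy.trans hyz.le, le_rfl⟩ (Set.Icc_subset_Icc_right hyz.le))

end Ell

section J3

variable {P R : Type*} [PartialOrder P] [CommRing R]

theorem apply_eq_zero_of_mem_J3 {i : ℕ} {f : Flag3 P → R} (hf : f ∈ J3 P R i) {s t : Flag3 P}
    (ht : ell t.1.1 t.1.2.2 < (i + 1 : ℕ)) (hst : ell s.1.1 s.1.2.2 + 1 ≤ ell t.1.1 t.1.2.2) :
    f s = 0 := by
  refine hf s ((ENat.add_lt_add_iff_right ENat.one_ne_top).mp ?_)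
  exact_mod_cast hst.trans_lt ht

variable [LocallyFiniteOrder P] [DecidableEq P]

theorem e3_mul3_mem_J3_succ {t₀ : Flag3 P} (h : t₀.1.1 < t₀.1.2.1) {i : ℕ} {f : Flag3 P → R}
    (hf : f ∈ J3 P R i) : mul3 P R (e3 R t₀) f ∈ J3 P R (i + 1) := by
  intro t ht
  refine Finset.sum_eq_zero fun p _ => ?_
  rw [e3]
  split_ifs with he
  · subst he
    obtain ⟨hu, hv⟩ := Finset.mem_product.mp p.2
    rw [Finset.mem_Icc] at hu hv
    have huv : p.1.1 ≤ p.1.2 := hu.2.trans hv.1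
    rw [one_mul]
    exact apply_eq_zero_of_mem_J3 hf ht (ell_add_one_le_of_lt_of_le h (huv.trans hv.2))
  · exact zero_mul _

theorem mul3_e3_mem_J3_succ {t₀ : Flag3 P} (h : t₀.1.2.1 < t₀.1.2.2) {i : ℕ} {f : Flag3 P → R}
    (hf : f ∈ J3 P R i) : mul3 P R f (e3 R t₀) ∈ J3 P R (i + 1) := by
  intro t ht
  refine Finset.sum_eq_zero fun p _ => ?_
  rw [e3]
  split_ifs with he
  · subst he
    obtain ⟨hu, hv⟩ := Finset.mem_product.mp p.2
    rw [Finset.mem_Icc] at hu hv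
    have huv : p.1.1 ≤ p.1.2 := hu.2.trans hv.1
    rw [mul_one]
    exact apply_eq_zero_of_mem_J3 hf ht (ell_add_one_le_of_le_of_lt (hu.1.trans huv) h)
  · exact mul_zero _

end J3

theorem e3_mul_mem_J3_succ_general
    {P R : Type*} [PartialOrder P] [DecidableEq P] [LocallyFiniteOrder P]
    [CommRing R] (i : ℕ) {f : Flag3 P → R} (hf : f ∈ J3 P R i)
    {x y z : P} (hxy : x ≤ y) (hyz : y ≤ z) :
    (x < y → mul3 P R (e3 R (⟨(x, y, z), hxy, hyz⟩ : Flag3 P)) f ∈ J3 P R (i + 1)) ∧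
    (y < z → mul3 P R f (e3 R (⟨(x, y, z), hxy, hyz⟩ : Flag3 P)) ∈ J3 P R (i + 1)) :=
  ⟨fun h => e3_mul3_mem_J3_succ h hf, fun h => mul3_e3_mem_J3_succ h hf⟩

/-- If `f ∈ J^3_i(P,R)` and `x ≤ y ≤ z`, then `x < y` implies
`e_{xyz}·f ∈ J^3_{i+1}(P,R)`, and `y < z` implies `f·e_{xyz} ∈ J^3_{i+1}(P,R)`. -/
theorem e3_mul_mem_J3_succ
    {P R : Type*} [PartialOrder P] [Fintype P] [DecidableEq P] [LocallyFiniteOrder P]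
    [CommRing R] (i : ℕ) {f : Flag3 P → R} (hf : f ∈ J3 P R i)
    {x y z : P} (hxy : x ≤ y) (hyz : y ≤ z) :
    (x < y → mul3 P R (e3 R (⟨(x, y, z), hxy, hyz⟩ : Flag3 P)) f ∈ J3 P R (i + 1)) ∧
    (y < z → mul3 P R f (e3 R (⟨(x, y, z), hxy, hyz⟩ : Flag3 P)) ∈ J3 P R (i + 1)) :=
  e3_mul_mem_J3_succ_general i hf hxy hyz
end

section
/- Let P be a finite poset and R a commutative unital ring. Then every derivation D of I^3(P,R) is zero. In particular, along the way one has D(e_x) = 0 for all x ∈ P (where e_x := e_{xxx}), D(e_{xxy}) = D(e_{xyy}) = 0 for all x < y, and D(e_{xzy}) = 0 for all x < z < y. -/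
/-!
The basis elements multiply by `e_{abc} e_{a'b'c'} = 0` unless `(b, c) = (a', b')`, and
`e_{xuv} e_{uvz} = ∑_{w ∈ [u, v]} e_{xwz}`. Applying `D` to vanishing products `e_s e_{mnn}` and
`e_{xxm} e_s` and evaluating at a well-chosen flag shows that `D e_s` is supported on `{s}`. The
diagonal coefficients `d s := (D e_s) s` then satisfy `d(x,y,z) = d(x,u,v) + d(u,v,z)` whenever
`x ≤ u ≤ y ≤ v ≤ z`; taking `(u, v) = (x, z)` and `y = x`, resp. `y = z`, gives
`d(x,z,z) = d(x,x,z) = 0`, hence `d = 0`. As the `e_s` form a basis, `D = 0`.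
-/

section

variable {P R : Type*} [PartialOrder P] [CommRing R] [DecidableEq P]

theorem e3_apply_self (s : Flag3 P) : e3 R s s = 1 := if_pos rfl

theorem e3_apply_of_ne {s t : Flag3 P} (h : t ≠ s) : e3 R s t = 0 := if_neg h

theorem e3_eq_single (s : Flag3 P) : e3 R s = Pi.single s 1 := by
  funext t
  simp [e3, Pi.single_apply]

end

def IsDerivation3 {P R : Type*} [PartialOrder P] [LocallyFiniteOrder P] [CommRing R]
    (D : (Flag3 P → R) →ₗ[R] (Flag3 P → R)) : Prop :=
  ∀ f g, D (mul3 P R f g) = mul3 P R (D f) g + mul3 P R f (D g)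

theorem IsDerivation3.mul3_add_mul3_eq_zero {P R : Type*} [PartialOrder P]
    [LocallyFiniteOrder P] [CommRing R] {D : (Flag3 P → R) →ₗ[R] (Flag3 P → R)}
    (hD : IsDerivation3 D) {f g : Flag3 P → R} (hfg : mul3 P R f g = 0) :
    mul3 P R (D f) g + mul3 P R f (D g) = 0 := by
  rw [← hD, hfg, map_zero]

section

variable {P R : Type*} [PartialOrder P] [LocallyFiniteOrder P] [CommRing R] [DecidableEq P]

open Classical in
theorem mul3_e3_left_apply {a₁ a₂ a₃ x y z : P} (ha₁ : a₁ ≤ a₂) (ha₂ : a₂ ≤ a₃)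
    (hxy : x ≤ y) (hyz : y ≤ z) (g : Flag3 P → R) :
    mul3 P R (e3 R ⟨(a₁, a₂, a₃), ha₁, ha₂⟩) g ⟨(x, y, z), hxy, hyz⟩ =
      if h : x = a₁ ∧ a₂ ≤ y ∧ y ≤ a₃ ∧ a₃ ≤ z then g ⟨(a₂, a₃, z), ha₂, h.2.2.2⟩ else 0 := by
  unfold mul3
  split_ifs with h
  · obtain ⟨rfl, h₁, h₂, h₃⟩ := h
    have hmem : (a₂, a₃) ∈ Finset.Icc x y ×ˢ Finset.Icc y z := by simp [*]
    rw [Finset.sum_eq_single_of_mem ⟨_, hmem⟩ (Finset.mem_attach _ _), e3_apply_self, one_mul]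
    rintro ⟨⟨u, v⟩, _⟩ - hne
    rw [e3_apply_of_ne, zero_mul]
    intro heq
    simp only [Subtype.mk.injEq, Prod.mk.injEq] at heq
    exact hne (by simp [heq.2])
  · refine Finset.sum_eq_zero fun ⟨⟨u, v⟩, huv⟩ _ => ?_
    rw [e3_apply_of_ne, zero_mul]
    intro heq
    simp only [Subtype.mk.injEq, Prod.mk.injEq] at heq
    obtain ⟨rfl, rfl, rfl⟩ := heq
    simp only [Finset.mem_product, Finset.mem_Icc] at huv
    exact h ⟨rfl, huv.1.2, huv.2.1, huv.2.2⟩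

open Classical in
theorem mul3_e3_right_apply {b₁ b₂ b₃ x y z : P} (hb₁ : b₁ ≤ b₂) (hb₂ : b₂ ≤ b₃)
    (hxy : x ≤ y) (hyz : y ≤ z) (f : Flag3 P → R) :
    mul3 P R f (e3 R ⟨(b₁, b₂, b₃), hb₁, hb₂⟩) ⟨(x, y, z), hxy, hyz⟩ =
      if h : z = b₃ ∧ x ≤ b₁ ∧ b₁ ≤ y ∧ y ≤ b₂ then f ⟨(x, b₁, b₂), h.2.1, hb₁⟩ else 0 := by
  unfold mul3
  split_ifs with h
  · obtain ⟨rfl, h₁, h₂, h₃⟩ := h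
    have hmem : (b₁, b₂) ∈ Finset.Icc x y ×ˢ Finset.Icc y z := by simp [*]
    rw [Finset.sum_eq_single_of_mem ⟨_, hmem⟩ (Finset.mem_attach _ _), e3_apply_self, mul_one]
    rintro ⟨⟨u, v⟩, _⟩ - hne
    rw [e3_apply_of_ne, mul_zero]
    intro heq
    simp only [Subtype.mk.injEq, Prod.mk.injEq] at heq
    exact hne (by simp [heq.1, heq.2.1])
  · refine Finset.sum_eq_zero fun ⟨⟨u, v⟩, huv⟩ _ => ?_
    rw [e3_apply_of_ne, mul_zero]
    intro heq
    simp only [Subtype.mk.injEq, Prod.mk.injEq] at heq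
    obtain ⟨rfl, rfl, rfl⟩ := heq
    simp only [Finset.mem_product, Finset.mem_Icc] at huv
    exact h ⟨rfl, huv.1.1, huv.1.2, huv.2.1⟩

theorem mul3_e3_e3_eq_zero {a₁ a₂ a₃ b₁ b₂ b₃ : P} (ha₁ : a₁ ≤ a₂) (ha₂ : a₂ ≤ a₃)
    (hb₁ : b₁ ≤ b₂) (hb₂ : b₂ ≤ b₃) (hne : (a₂, a₃) ≠ (b₁, b₂)) :
    mul3 P R (e3 R ⟨(a₁, a₂, a₃), ha₁, ha₂⟩) (e3 R ⟨(b₁, b₂, b₃), hb₁, hb₂⟩) = 0 := by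
  funext ⟨⟨x, y, z⟩, hxy, hyz⟩
  rw [mul3_e3_left_apply ha₁ ha₂ hxy hyz]
  split_ifs
  · refine e3_apply_of_ne fun heq => hne ?_
    simp only [Subtype.mk.injEq, Prod.mk.injEq] at heq
    rw [heq.1, heq.2.1]
  · rfl

theorem mul3_e3_e3_eq_sum {x u v z : P} (hxu : x ≤ u) (huv : u ≤ v) (hvz : v ≤ z) :
    mul3 P R (e3 R ⟨(x, u, v), hxu, huv⟩) (e3 R ⟨(u, v, z), huv, hvz⟩) =
      ∑ w ∈ (Finset.Icc u v).attach, e3 R ⟨(x, w.1, z),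
        hxu.trans (Finset.mem_Icc.mp w.2).1, (Finset.mem_Icc.mp w.2).2.trans hvz⟩ := by
  funext ⟨⟨a, b, c⟩, hab, hbc⟩
  rw [mul3_e3_left_apply hxu huv hab hbc, Finset.sum_apply]
  split_ifs with h
  · obtain ⟨rfl, hub, hbv, hvc⟩ := h
    by_cases hc : c = z
    · subst hc
      rw [e3_apply_self, Finset.sum_eq_single_of_mem ⟨b, Finset.mem_Icc.mpr ⟨hub, hbv⟩⟩
        (Finset.mem_attach _ _), e3_apply_self]
      rintro ⟨w, _⟩ - hne
      refine e3_apply_of_ne fun heq => hne ?_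
      simp only [Subtype.mk.injEq, Prod.mk.injEq] at heq
      exact Subtype.ext heq.2.1.symm
    · rw [e3_apply_of_ne, Finset.sum_eq_zero]
      · rintro ⟨w, _⟩ -
        refine e3_apply_of_ne fun heq => hc ?_
        simp only [Subtype.mk.injEq, Prod.mk.injEq] at heq
        exact heq.2.2
      · intro heq
        simp only [Subtype.mk.injEq, Prod.mk.injEq] at heq
        exact hc heq.2.2
  · refine (Finset.sum_eq_zero fun ⟨w, hw⟩ _ => e3_apply_of_ne fun heq => h ?_).symm
    simp only [Subtype.mk.injEq, Prod.mk.injEq] at heq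
    obtain ⟨rfl, rfl, rfl⟩ := heq
    exact ⟨rfl, (Finset.mem_Icc.mp hw).1, (Finset.mem_Icc.mp hw).2, hvz⟩

namespace IsDerivation3

variable {D : (Flag3 P → R) →ₗ[R] (Flag3 P → R)}

/-- Read off from `D (e_{puv} e_{mnn}) = 0` at the flag `(x, y, n)`. -/
theorem apply_e3_eq_zero_of_right (hD : IsDerivation3 D) {p u v x m n y : P}
    (hpu : p ≤ u) (huv : u ≤ v) (hxm : x ≤ m) (hmn : m ≤ n) (hmy : m ≤ y) (hyn : y ≤ n)
    (hne : (u, v) ≠ (m, n)) (hy : ¬(x = p ∧ u ≤ y ∧ y ≤ v ∧ v ≤ n)) :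
    D (e3 R ⟨(p, u, v), hpu, huv⟩) ⟨(x, m, n), hxm, hmn⟩ = 0 := by
  have h := congrFun (hD.mul3_add_mul3_eq_zero (mul3_e3_e3_eq_zero hpu huv hmn le_rfl hne))
    ⟨(x, y, n), hxm.trans hmy, hyn⟩
  rw [Pi.add_apply, mul3_e3_right_apply hmn le_rfl (hxm.trans hmy) hyn,
    mul3_e3_left_apply hpu huv (hxm.trans hmy) hyn, dif_neg hy, add_zero] at h
  simpa [hxm, hmy, hyn] using h

/-- Read off from `D (e_{xxm} e_{puv}) = 0` at the flag `(x, y, n)`. -/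
theorem apply_e3_eq_zero_of_left (hD : IsDerivation3 D) {p u v x m n y : P}
    (hpu : p ≤ u) (huv : u ≤ v) (hxm : x ≤ m) (hmn : m ≤ n) (hxy : x ≤ y) (hym : y ≤ m)
    (hne : (x, m) ≠ (p, u)) (hy : ¬(n = v ∧ x ≤ p ∧ p ≤ y ∧ y ≤ u)) :
    D (e3 R ⟨(p, u, v), hpu, huv⟩) ⟨(x, m, n), hxm, hmn⟩ = 0 := by
  have h := congrFun (hD.mul3_add_mul3_eq_zero (mul3_e3_e3_eq_zero le_rfl hxm hpu huv hne))
    ⟨(x, y, n), hxy, hym.trans hmn⟩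
  rw [Pi.add_apply, mul3_e3_right_apply hpu huv hxy (hym.trans hmn),
    mul3_e3_left_apply le_rfl hxm hxy (hym.trans hmn), dif_neg hy, zero_add] at h
  simpa [hxy, hym, hmn] using h

theorem apply_e3_apply_of_ne (hD : IsDerivation3 D) {s t : Flag3 P} (hts : t ≠ s) :
    D (e3 R s) t = 0 := by
  obtain ⟨⟨p, u, v⟩, hpu, huv⟩ := s
  obtain ⟨⟨x, m, n⟩, hxm, hmn⟩ := t
  by_cases hxp : x = p
  · subst hxp
    by_cases hvn : v = n
    · subst hvn
      have hum : u ≠ m := by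
        rintro rfl
        exact hts rfl
      by_cases hu : u ≤ m
      · exact hD.apply_e3_eq_zero_of_left hpu huv hxm hmn hxm le_rfl (by simp [hum.symm])
          fun h => hum (le_antisymm hu h.2.2.2)
      · exact hD.apply_e3_eq_zero_of_right hpu huv hxm hmn le_rfl hmn (by simp [hum])
          fun h => hu h.2.1
    · exact hD.apply_e3_eq_zero_of_right hpu huv hxm hmn hmn le_rfl (by simp [hvn])
        fun h => hvn (le_antisymm h.2.2.2 h.2.2.1)
  · exact hD.apply_e3_eq_zero_of_left hpu huv hxm hmn le_rfl hxm (by simp [hxp])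
      fun h => hxp (le_antisymm h.2.1 h.2.2.1)

/-- Read off from `D (e_{xuv} e_{uvz}) = ∑_{w ∈ [u, v]} D e_{xwz}` at the flag `(x, y, z)`. -/
theorem apply_e3_apply_self_eq_add (hD : IsDerivation3 D) {x u y v z : P}
    (hxu : x ≤ u) (huy : u ≤ y) (hyv : y ≤ v) (hvz : v ≤ z) :
    D (e3 R ⟨(x, y, z), hxu.trans huy, hyv.trans hvz⟩)
        ⟨(x, y, z), hxu.trans huy, hyv.trans hvz⟩ =
      D (e3 R ⟨(x, u, v), hxu, huy.trans hyv⟩) ⟨(x, u, v), hxu, huy.trans hyv⟩ +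
        D (e3 R ⟨(u, v, z), huy.trans hyv, hvz⟩) ⟨(u, v, z), huy.trans hyv, hvz⟩ := by
  have huv := huy.trans hyv
  have h := congrFun (hD (e3 R ⟨(x, u, v), hxu, huv⟩) (e3 R ⟨(u, v, z), huv, hvz⟩))
    ⟨(x, y, z), hxu.trans huy, hyv.trans hvz⟩
  rw [mul3_e3_e3_eq_sum hxu huv hvz, map_sum, Finset.sum_apply, Finset.sum_eq_single_of_mem
    ⟨y, Finset.mem_Icc.mpr ⟨huy, hyv⟩⟩ (Finset.mem_attach _ _), Pi.add_apply,
    mul3_e3_right_apply huv hvz (hxu.trans huy) (hyv.trans hvz),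
    mul3_e3_left_apply hxu huv (hxu.trans huy) (hyv.trans hvz)] at h
  · simpa [hxu, huy, hyv, hvz] using h
  · rintro ⟨w, _⟩ - hwy
    refine hD.apply_e3_apply_of_ne fun heq => hwy (Subtype.ext ?_)
    simp only [Subtype.mk.injEq, Prod.mk.injEq] at heq
    exact heq.2.1.symm

theorem apply_e3_apply_self (hD : IsDerivation3 D) (s : Flag3 P) : D (e3 R s) s = 0 := by
  obtain ⟨⟨x, y, z⟩, hxy, hyz⟩ := s
  have hxz : x ≤ z := hxy.trans hyz
  have hxzz := left_eq_add.mp (hD.apply_e3_apply_self_eq_add le_rfl le_rfl hxz le_rfl)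
  have hxxz := right_eq_add.mp (hD.apply_e3_apply_self_eq_add le_rfl hxz le_rfl le_rfl)
  rw [hD.apply_e3_apply_self_eq_add le_rfl hxy hyz le_rfl, hxxz, hxzz, add_zero]

theorem apply_e3 (hD : IsDerivation3 D) (s : Flag3 P) : D (e3 R s) = 0 := by
  funext t
  by_cases hts : t = s
  · subst hts
    exact hD.apply_e3_apply_self t
  · exact hD.apply_e3_apply_of_ne hts

theorem eq_zero [Finite P] (hD : IsDerivation3 D) : D = 0 :=
  (Pi.basisFun R (Flag3 P)).ext fun s => by
    rw [Pi.basisFun_apply, ← e3_eq_single, hD.apply_e3, LinearMap.zero_apply]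

end IsDerivation3

end

/-- Every `R`-linear derivation `D` of `I^3(P,R)` is zero; in particular
`D(e_x) = 0`, `D(e_{xxy}) = D(e_{xyy}) = 0` for `x < y`, and `D(e_{xzy}) = 0` for
`x < z < y`. -/
theorem derivations_are_zero
    {P R : Type*} [PartialOrder P] [Fintype P] [DecidableEq P] [LocallyFiniteOrder P]
    [CommRing R]
    (D : (Flag3 P → R) →ₗ[R] (Flag3 P → R))
    (hD : ∀ f g : Flag3 P → R,
      D (mul3 P R f g) = mul3 P R (D f) g + mul3 P R f (D g)) :
    (∀ f : Flag3 P → R, D f = 0) ∧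
    (∀ x : P, D (e3 R (⟨(x, x, x), le_rfl, le_rfl⟩ : Flag3 P)) = 0) ∧
    (∀ x y : P, ∀ h : x < y,
      D (e3 R (⟨(x, x, y), le_rfl, h.le⟩ : Flag3 P)) = 0 ∧
      D (e3 R (⟨(x, y, y), h.le, le_rfl⟩ : Flag3 P)) = 0) ∧
    (∀ x z y : P, ∀ h1 : x < z, ∀ h2 : z < y,
      D (e3 R (⟨(x, z, y), h1.le, h2.le⟩ : Flag3 P)) = 0) := by
  have hzero (f : Flag3 P → R) : D f = 0 := by
    rw [IsDerivation3.eq_zero hD, LinearMap.zero_apply]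
  exact ⟨hzero, fun _ => hzero _, fun _ _ _ => ⟨hzero _, hzero _⟩, fun _ _ _ _ _ => hzero _⟩
end
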